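/- arXiv:1911.01688 — 13 statements merged into one kernel-verified Lean document; each statement's English description precedes it below -/
import Mathlib

section
/- Let F_k denote the k-th Fibonacci number (F₁ = F₂ = 1, F_{k+2} = F_{k+1} + F_k). For every integer n ≥ 1, the triple (p, q, r) = (F_{2n+1}, F_{2n+2}, F_{2n+3}) satisfies pq + pr − qr = 1, and F_{2n+1}, F_{2n+2}, F_{2n+3} are pairwise relatively prime. -/
theorem Nat.fib_coprime_fib_add_two (k : ℕ) : Nat.Coprime (Nat.fib k) (Nat.fib (k + 2)) := by
  rw [Nat.fib_add_two, Nat.coprime_self_add_right]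
  exact Nat.fib_coprime_fib_succ k

theorem Nat.fib_two_mul_add_one_mul_fib_two_mul_add_three_sub_sq (n : ℕ) :
    (Nat.fib (2 * n + 1) : ℤ) * Nat.fib (2 * n + 3) - (Nat.fib (2 * n + 2) : ℤ) ^ 2 = 1 := by
  have cassini := Int.fib_succ_mul_fib_pred_sub_fib_sq (2 * n + 2 : ℕ)
  rw [Int.natAbs_natCast, Even.neg_one_pow ⟨n + 1, by ring⟩,
    show ((2 * n + 2 : ℕ) : ℤ) + 1 = (2 * n + 3 : ℕ) by push_cast; ring,
    show ((2 * n + 2 : ℕ) : ℤ) - 1 = (2 * n + 1 : ℕ) by push_cast; ring] at cassini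
  simp only [Int.fib_natCast] at cassini
  linear_combination cassini

theorem stmt_3_general (n : ℕ) :
    ((Nat.fib (2 * n + 1) : ℤ) * (Nat.fib (2 * n + 2) : ℤ) +
      (Nat.fib (2 * n + 1) : ℤ) * (Nat.fib (2 * n + 3) : ℤ) -
      (Nat.fib (2 * n + 2) : ℤ) * (Nat.fib (2 * n + 3) : ℤ) = 1) ∧
    Nat.Coprime (Nat.fib (2 * n + 1)) (Nat.fib (2 * n + 2)) ∧
    Nat.Coprime (Nat.fib (2 * n + 1)) (Nat.fib (2 * n + 3)) ∧
    Nat.Coprime (Nat.fib (2 * n + 2)) (Nat.fib (2 * n + 3)) := by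
  have recurrence : (Nat.fib (2 * n + 3) : ℤ) = Nat.fib (2 * n + 1) + Nat.fib (2 * n + 2) :=
    mod_cast Nat.fib_add_two
  refine ⟨?_, Nat.fib_coprime_fib_succ _, Nat.fib_coprime_fib_add_two _,
    Nat.fib_coprime_fib_succ _⟩
  -- with `r = p + q`, `p q + p r - q r - 1` differs from Cassini's `p r - q² - 1` by `q (p + q - r)`
  linear_combination Nat.fib_two_mul_add_one_mul_fib_two_mul_add_three_sub_sq n -
    (Nat.fib (2 * n + 2) : ℤ) * recurrence

/-- Let `F_k` be the `k`-th Fibonacci number (`F₁ = F₂ = 1`,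
`F_{k+2} = F_{k+1} + F_k`). For every `n ≥ 1`, the triple
`(p,q,r) = (F_{2n+1}, F_{2n+2}, F_{2n+3})` satisfies `pq + pr − qr = 1` and consists of
pairwise relatively prime numbers. -/
theorem stmt_3 (n : ℕ) (hn : 1 ≤ n) :
    ((Nat.fib (2 * n + 1) : ℤ) * (Nat.fib (2 * n + 2) : ℤ) +
      (Nat.fib (2 * n + 1) : ℤ) * (Nat.fib (2 * n + 3) : ℤ) -
      (Nat.fib (2 * n + 2) : ℤ) * (Nat.fib (2 * n + 3) : ℤ) = 1) ∧
    Nat.Coprime (Nat.fib (2 * n + 1)) (Nat.fib (2 * n + 2)) ∧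
    Nat.Coprime (Nat.fib (2 * n + 1)) (Nat.fib (2 * n + 3)) ∧
    Nat.Coprime (Nat.fib (2 * n + 2)) (Nat.fib (2 * n + 3)) :=
  stmt_3_general n
end

section
/- For every integer n ≥ 1, each of the triples (p,q,r) = (2n+1, 4n+1, 4n+3), (2n+1, 3n+2, 6n+1), (2n+1, 3n+1, 6n+5), and (4n+3, 5n+4, 20n+11) satisfies pq + pr − qr = 1 and consists of pairwise relatively prime positive integers; likewise, for every integer p ≥ 2, the triple (p, p+1, p²+p−1) satisfies this identity and is pairwise relatively prime. -/
/-- A triple of positive integers `(p,q,r)` satisfies the identity `pq + pr − qr = 1`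
and is pairwise relatively prime. -/
def GoodTriple (p q r : ℤ) : Prop :=
  0 < p ∧ 0 < q ∧ 0 < r ∧ p * q + p * r - q * r = 1 ∧
    IsCoprime p q ∧ IsCoprime p r ∧ IsCoprime q r

section PairwiseCoprime

variable {R : Type*} [CommRing R] {p q r : R}

-- The identity is itself a Bézout relation for each of the three pairs.
theorem isCoprime_left_of_mul_add_mul_sub_mul_eq_one (h : p * q + p * r - q * r = 1) :
    IsCoprime p q :=
  ⟨q + r, -r, by linear_combination h⟩

theorem isCoprime_right_of_mul_add_mul_sub_mul_eq_one (h : p * q + p * r - q * r = 1) :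
    IsCoprime p r :=
  ⟨q, p - q, by linear_combination h⟩

theorem isCoprime_mid_of_mul_add_mul_sub_mul_eq_one (h : p * q + p * r - q * r = 1) :
    IsCoprime q r :=
  ⟨p, p - q, by linear_combination h⟩

end PairwiseCoprime

theorem goodTriple_of_pos_of_identity {p q r : ℤ} (hp : 0 < p) (hq : 0 < q) (hr : 0 < r)
    (h : p * q + p * r - q * r = 1) : GoodTriple p q r :=
  ⟨hp, hq, hr, h, isCoprime_left_of_mul_add_mul_sub_mul_eq_one h,
    isCoprime_right_of_mul_add_mul_sub_mul_eq_one h, isCoprime_mid_of_mul_add_mul_sub_mul_eq_one h⟩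

/-- For every integer `n ≥ 1`, each of the triples
`(2n+1, 4n+1, 4n+3)`, `(2n+1, 3n+2, 6n+1)`, `(2n+1, 3n+1, 6n+5)`, `(4n+3, 5n+4, 20n+11)`
satisfies `pq + pr − qr = 1` and consists of pairwise relatively prime positive integers;
likewise for `(p, p+1, p²+p−1)` for every integer `p ≥ 2`. -/
theorem stmt_4 :
    (∀ n : ℤ, 1 ≤ n → GoodTriple (2 * n + 1) (4 * n + 1) (4 * n + 3)) ∧
    (∀ n : ℤ, 1 ≤ n → GoodTriple (2 * n + 1) (3 * n + 2) (6 * n + 1)) ∧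
    (∀ n : ℤ, 1 ≤ n → GoodTriple (2 * n + 1) (3 * n + 1) (6 * n + 5)) ∧
    (∀ n : ℤ, 1 ≤ n → GoodTriple (4 * n + 3) (5 * n + 4) (20 * n + 11)) ∧
    (∀ p : ℤ, 2 ≤ p → GoodTriple p (p + 1) (p ^ 2 + p - 1)) := by
  refine ⟨fun n hn => ?_, fun n hn => ?_, fun n hn => ?_, fun n hn => ?_, fun p hp => ?_⟩
  all_goals
    exact goodTriple_of_pos_of_identity (by nlinarith) (by nlinarith) (by nlinarith) (by ring)
end

section
/- Let p, q, r be pairwise relatively prime positive integers with p < q < r satisfying pq + pr − qr = 1, and let I be the intersection matrix of the graph G(p,q,r). Then I is negative definite and det I = (−1)^{q+r}; in particular |det I| = 1. -/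
/-- Adjacency (as ordered pairs of indices) in the star-shaped graph `G(p,q,r)`.
Vertices are indexed by `Fin (q+r)`: index `0` is the central vertex `c` (weight `−2`),
index `1` is the vertex `u` (weight `−p`), indices `2,…,q` are the path `w₁,…,w_{q−1}`
(all of weight `−2`, with `c` adjacent to `w₁`), and indices `q+1,…,q+r−1` are the path
`x₁,…,x_{r−1}` (all of weight `−2`, with `c` adjacent to `x₁`). -/
def gAdj (q : ℕ) (i j : ℕ) : Bool :=
  (i == 0 && (j == 1 || j == 2 || j == q + 1)) || (2 ≤ i && i ≠ q && j == i + 1)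

/-- The intersection matrix of the star-shaped graph `G(p,q,r)`: the diagonal entry at a
vertex is its weight, the entry at a pair of adjacent vertices is `1`, and all other
entries are `0`. -/
def interMatrix (p q r : ℕ) : Matrix (Fin (q + r)) (Fin (q + r)) ℤ :=
  Matrix.of fun i j =>
    if i = j then (if (i : ℕ) = 1 then -(p : ℤ) else -2)
    else if gAdj q i j ∨ gAdj q j i then 1 else 0

lemma gAdj_iff (q i j : ℕ) : gAdj q i j = true ↔
    ((i = 0 ∧ (j = 1 ∨ j = 2 ∨ j = q+1)) ∨ (2 ≤ i ∧ i ≠ q ∧ j = i+1)) := by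
  simp [gAdj, Bool.or_eq_true, Bool.and_eq_true, beq_iff_eq, decide_eq_true_eq]
  tauto

/-- adjacency as a Prop -/
def adjP (q i j : ℕ) : Prop :=
  ((i = 0 ∧ (j = 1 ∨ j = 2 ∨ j = q+1)) ∨ (2 ≤ i ∧ i ≠ q ∧ j = i+1)) ∨
  ((j = 0 ∧ (i = 1 ∨ i = 2 ∨ i = q+1)) ∨ (2 ≤ j ∧ j ≠ q ∧ i = j+1))

lemma inter_diag {p q r : ℕ} (a : Fin (q+r)) :
    interMatrix p q r a a = if (a : ℕ) = 1 then -(p:ℤ) else -2 := by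
  simp [interMatrix]

lemma inter_one {p q r : ℕ} (a b : Fin (q+r)) (h : (a:ℕ) ≠ (b:ℕ)) (hadj : adjP q a b) :
    interMatrix p q r a b = 1 := by
  have hne : a ≠ b := fun hh => h (by rw [hh])
  simp only [interMatrix, Matrix.of_apply, if_neg hne]
  rw [if_pos]
  rw [gAdj_iff, gAdj_iff]
  exact hadj

lemma inter_zero {p q r : ℕ} (a b : Fin (q+r)) (h : (a:ℕ) ≠ (b:ℕ)) (hadj : ¬ adjP q a b) :
    interMatrix p q r a b = 0 := by
  have hne : a ≠ b := fun hh => h (by rw [hh])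
  simp only [interMatrix, Matrix.of_apply, if_neg hne]
  rw [if_neg]
  rw [gAdj_iff, gAdj_iff]
  exact hadj

lemma sum_eq_two {n : ℕ} (f : Fin n → ℤ) (a b : Fin n) (hab : a ≠ b)
    (h0 : ∀ j, j ≠ a → j ≠ b → f j = 0) :
    ∑ j, f j = f a + f b := by
  have h : ∑ j, f j = ∑ j ∈ ({a, b} : Finset (Fin n)), f j := by
    refine (Finset.sum_subset (Finset.subset_univ _) ?_).symm
    intro x _ hx
    simp only [Finset.mem_insert, Finset.mem_singleton, not_or] at hx
    exact h0 x hx.1 hx.2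
  rw [h, Finset.sum_pair hab]

lemma sum_eq_three {n : ℕ} (f : Fin n → ℤ) (a b c : Fin n)
    (hab : a ≠ b) (hac : a ≠ c) (hbc : b ≠ c)
    (h0 : ∀ j, j ≠ a → j ≠ b → j ≠ c → f j = 0) :
    ∑ j, f j = f a + f b + f c := by
  have h : ∑ j, f j = ∑ j ∈ ({a, b, c} : Finset (Fin n)), f j := by
    refine (Finset.sum_subset (Finset.subset_univ _) ?_).symm
    intro x _ hx
    simp only [Finset.mem_insert, Finset.mem_singleton, not_or] at hx
    exact h0 x hx.1 hx.2.1 hx.2.2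
  rw [h]
  rw [show ({a,b,c} : Finset (Fin n)) = insert a {b,c} from rfl]
  rw [Finset.sum_insert (by simp [hab, hac]), Finset.sum_pair hbc]
  ring

lemma sum_eq_four {n : ℕ} (f : Fin n → ℤ) (a b c d : Fin n)
    (hab : a ≠ b) (hac : a ≠ c) (had : a ≠ d) (hbc : b ≠ c) (hbd : b ≠ d) (hcd : c ≠ d)
    (h0 : ∀ j, j ≠ a → j ≠ b → j ≠ c → j ≠ d → f j = 0) :
    ∑ j, f j = f a + f b + f c + f d := by
  have h : ∑ j, f j = ∑ j ∈ ({a, b, c, d} : Finset (Fin n)), f j := by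
    refine (Finset.sum_subset (Finset.subset_univ _) ?_).symm
    intro x _ hx
    simp only [Finset.mem_insert, Finset.mem_singleton, not_or] at hx
    exact h0 x hx.1 hx.2.1 hx.2.2.1 hx.2.2.2
  rw [h]
  rw [show ({a,b,c,d} : Finset (Fin n)) = insert a (insert b {c,d}) from rfl]
  rw [Finset.sum_insert (by simp [hab, hac, had]), Finset.sum_insert (by simp [hbc, hbd]),
    Finset.sum_pair hcd]
  ring

def greenEnt (p q r : ℕ) (a b : ℕ) : ℤ :=
  if a = 1 then
    if b = 1 then (q:ℤ)+r
    else if b ≤ q then (r:ℤ) * ((q:ℤ) - ((b-1 :ℕ):ℤ))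
    else (q:ℤ) * ((r:ℤ) - ((b-q:ℕ):ℤ))
  else if a ≤ q then
    if b = 1 then (r:ℤ) * ((q:ℤ) - ((a-1:ℕ):ℤ))
    else if b ≤ q then
      ((p:ℤ)*(r:ℤ) + ((min (a-1) (b-1) :ℕ):ℤ) * ((p:ℤ)-(r:ℤ))) *
        ((q:ℤ) - ((max (a-1) (b-1):ℕ):ℤ))
    else (p:ℤ) * ((q:ℤ) - ((a-1:ℕ):ℤ)) * ((r:ℤ) - ((b-q:ℕ):ℤ))
  else
    if b = 1 then (q:ℤ) * ((r:ℤ) - ((a-q:ℕ):ℤ))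
    else if b ≤ q then (p:ℤ) * ((q:ℤ) - ((b-1:ℕ):ℤ)) * ((r:ℤ) - ((a-q:ℕ):ℤ))
    else ((p:ℤ)*(q:ℤ) + ((min (a-q) (b-q):ℕ):ℤ) * ((p:ℤ)-(q:ℤ))) *
        ((r:ℤ) - ((max (a-q) (b-q):ℕ):ℤ))

section evals
variable (p q r a b : ℕ)

lemma gE_uu : greenEnt p q r 1 1 = (q:ℤ)+r := by simp [greenEnt]

lemma gE_uw (hb1 : b ≠ 1) (hbq : b ≤ q) :
    greenEnt p q r 1 b = (r:ℤ) * ((q:ℤ) - ((b-1:ℕ):ℤ)) := by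
  simp only [greenEnt, if_pos rfl, if_true, if_neg hb1, if_pos hbq]

lemma gE_ux (hq : 1 ≤ q) (hb : q < b) : greenEnt p q r 1 b = (q:ℤ) * ((r:ℤ) - ((b-q:ℕ):ℤ)) := by
  have h1 : b ≠ 1 := by omega
  simp only [greenEnt, if_pos rfl, if_true, if_neg h1, if_neg (by omega : ¬ b ≤ q)]

lemma gE_wu (ha1 : a ≠ 1) (haq : a ≤ q) :
    greenEnt p q r a 1 = (r:ℤ) * ((q:ℤ) - ((a-1:ℕ):ℤ)) := by
  simp only [greenEnt, if_neg ha1, if_pos haq, if_pos rfl, if_true]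

lemma gE_ww (ha1 : a ≠ 1) (haq : a ≤ q) (hb1 : b ≠ 1) (hbq : b ≤ q) :
    greenEnt p q r a b = ((p:ℤ)*(r:ℤ) + ((min (a-1) (b-1) :ℕ):ℤ) * ((p:ℤ)-(r:ℤ))) *
        ((q:ℤ) - ((max (a-1) (b-1):ℕ):ℤ)) := by
  simp only [greenEnt, if_neg ha1, if_pos haq, if_neg hb1, if_pos hbq]

lemma gE_wx (hq : 1 ≤ q) (ha1 : a ≠ 1) (haq : a ≤ q) (hb : q < b) :
    greenEnt p q r a b = (p:ℤ) * ((q:ℤ) - ((a-1:ℕ):ℤ)) * ((r:ℤ) - ((b-q:ℕ):ℤ)) := by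
  simp only [greenEnt, if_neg ha1, if_pos haq, if_neg (by omega : ¬ b = 1),
    if_neg (by omega : ¬ b ≤ q)]

lemma gE_xu (hq : 1 ≤ q) (ha : q < a) : greenEnt p q r a 1 = (q:ℤ) * ((r:ℤ) - ((a-q:ℕ):ℤ)) := by
  simp only [greenEnt, if_neg (by omega : ¬ a = 1), if_neg (by omega : ¬ a ≤ q), if_pos rfl, if_true]

lemma gE_xw (hq : 1 ≤ q) (ha : q < a) (hb1 : b ≠ 1) (hbq : b ≤ q) :
    greenEnt p q r a b = (p:ℤ) * ((q:ℤ) - ((b-1:ℕ):ℤ)) * ((r:ℤ) - ((a-q:ℕ):ℤ)) := by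
  simp only [greenEnt, if_neg (by omega : ¬ a = 1), if_neg (by omega : ¬ a ≤ q),
    if_neg hb1, if_pos hbq]

lemma gE_xx (hq : 1 ≤ q) (ha : q < a) (hb : q < b) :
    greenEnt p q r a b = ((p:ℤ)*(q:ℤ) + ((min (a-q) (b-q):ℕ):ℤ) * ((p:ℤ)-(q:ℤ))) *
        ((r:ℤ) - ((max (a-q) (b-q):ℕ):ℤ)) := by
  simp only [greenEnt, if_neg (by omega : ¬ a = 1), if_neg (by omega : ¬ a ≤ q),
    if_neg (by omega : ¬ b = 1), if_neg (by omega : ¬ b ≤ q)]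

end evals

lemma rowC (p q r b : ℕ) (hp : 2 ≤ p) (hpq : p < q) (hqr : q < r)
    (heq : (p:ℤ)*q + (p:ℤ)*r - (q:ℤ)*r = 1) (hb : b < q+r) :
    2 * greenEnt p q r 0 b - greenEnt p q r 1 b - greenEnt p q r 2 b
      - greenEnt p q r (q+1) b = if b = 0 then 1 else 0 := by
  have hq3 : 3 ≤ q := by omega
  rcases (show b = 1 ∨ (b ≤ q ∧ b ≠ 1) ∨ (q+1 ≤ b) by omega) with hb1 | ⟨hbq, hb1⟩ | hbx
  · subst hb1
    rw [gE_wu p q r 0 (by omega) (by omega), gE_uu, gE_wu p q r 2 (by omega) (by omega),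
      gE_xu p q r (q+1) (by omega) (by omega), if_neg (by omega)]
    rw [show ((0:ℕ)-1 : ℕ) = 0 from by omega, show ((2:ℕ)-1:ℕ) = 1 from by omega,
      show ((q+1)-q : ℕ) = 1 from by omega]
    push_cast
    ring
  · rw [gE_ww p q r 0 b (by omega) (by omega) hb1 hbq,
      gE_uw p q r b hb1 hbq,
      gE_ww p q r 2 b (by omega) (by omega) hb1 hbq,
      gE_xw p q r (q+1) b (by omega) (by omega) hb1 hbq]
    rw [show min ((0:ℕ)-1) (b-1) = 0 from by omega,
      show max ((0:ℕ)-1) (b-1) = b-1 from by omega,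
      show ((q+1)-q : ℕ) = 1 from by omega]
    rcases (show b = 0 ∨ 2 ≤ b by omega) with rfl | hb2
    · rw [if_pos rfl,
        show min ((2:ℕ)-1) ((0:ℕ)-1) = 0 from by omega,
        show max ((2:ℕ)-1) ((0:ℕ)-1) = 1 from by omega,
        show ((0:ℕ)-1 : ℕ) = 0 from by omega]
      push_cast
      linear_combination heq
    · rw [if_neg (by omega),
        show min ((2:ℕ)-1) (b-1) = 1 from by omega,
        show max ((2:ℕ)-1) (b-1) = b-1 from by omega]
      push_cast
      ring
  · rw [gE_wx p q r 0 b (by omega) (by omega) (by omega) (by omega),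
      gE_ux p q r b (by omega) (by omega),
      gE_wx p q r 2 b (by omega) (by omega) (by omega) (by omega),
      gE_xx p q r (q+1) b (by omega) (by omega) (by omega),
      if_neg (by omega)]
    rw [show ((0:ℕ)-1 : ℕ) = 0 from by omega, show ((2:ℕ)-1:ℕ) = 1 from by omega,
      show min ((q+1)-q) (b-q) = 1 from by omega,
      show max ((q+1)-q) (b-q) = b-q from by omega]
    push_cast
    ring

lemma rowU (p q r b : ℕ) (hp : 2 ≤ p) (hpq : p < q) (hqr : q < r)
    (heq : (p:ℤ)*q + (p:ℤ)*r - (q:ℤ)*r = 1) (hb : b < q+r) :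
    (p:ℤ) * greenEnt p q r 1 b - greenEnt p q r 0 b = if b = 1 then 1 else 0 := by
  have hq3 : 3 ≤ q := by omega
  rcases (show b = 1 ∨ (b ≤ q ∧ b ≠ 1) ∨ (q+1 ≤ b) by omega) with hb1 | ⟨hbq, hb1⟩ | hbx
  · subst hb1
    rw [gE_uu, gE_wu p q r 0 (by omega) (by omega), if_pos rfl,
      show ((0:ℕ)-1 : ℕ) = 0 from by omega]
    push_cast
    linear_combination heq
  · rw [gE_uw p q r b hb1 hbq, gE_ww p q r 0 b (by omega) (by omega) hb1 hbq,
      if_neg (by omega),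
      show min ((0:ℕ)-1) (b-1) = 0 from by omega,
      show max ((0:ℕ)-1) (b-1) = b-1 from by omega]
    push_cast
    ring
  · rw [gE_ux p q r b (by omega) (by omega),
      gE_wx p q r 0 b (by omega) (by omega) (by omega) (by omega), if_neg (by omega),
      show ((0:ℕ)-1 : ℕ) = 0 from by omega]
    push_cast
    ring

lemma rowW2 (p q r b : ℕ) (hp : 2 ≤ p) (hpq : p < q) (hqr : q < r)
    (heq : (p:ℤ)*q + (p:ℤ)*r - (q:ℤ)*r = 1) (hb : b < q+r) :
    2 * greenEnt p q r 2 b - greenEnt p q r 0 b - greenEnt p q r 3 b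
      = if b = 2 then 1 else 0 := by
  have hq3 : 3 ≤ q := by omega
  rcases (show b = 1 ∨ (b ≤ q ∧ b ≠ 1) ∨ (q+1 ≤ b) by omega) with hb1 | ⟨hbq, hb1⟩ | hbx
  · subst hb1
    rw [gE_wu p q r 2 (by omega) (by omega), gE_wu p q r 0 (by omega) (by omega),
      gE_wu p q r 3 (by omega) (by omega), if_neg (by omega),
      show ((0:ℕ)-1 : ℕ) = 0 from by omega, show ((2:ℕ)-1:ℕ) = 1 from by omega,
      show ((3:ℕ)-1:ℕ) = 2 from by omega]
    push_cast
    ring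
  · rw [gE_ww p q r 2 b (by omega) (by omega) hb1 hbq,
      gE_ww p q r 0 b (by omega) (by omega) hb1 hbq,
      gE_ww p q r 3 b (by omega) (by omega) hb1 hbq,
      show min ((0:ℕ)-1) (b-1) = 0 from by omega,
      show max ((0:ℕ)-1) (b-1) = b-1 from by omega]
    rcases (show b = 0 ∨ b = 2 ∨ 3 ≤ b by omega) with rfl | rfl | hb3
    · rw [if_neg (by omega),
        show min ((2:ℕ)-1) ((0:ℕ)-1) = 0 from by omega,
        show max ((2:ℕ)-1) ((0:ℕ)-1) = 1 from by omega,
        show min ((3:ℕ)-1) ((0:ℕ)-1) = 0 from by omega,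
        show max ((3:ℕ)-1) ((0:ℕ)-1) = 2 from by omega]
      push_cast
      ring
    · rw [if_pos rfl,
        show min ((2:ℕ)-1) ((2:ℕ)-1) = 1 from by omega,
        show max ((2:ℕ)-1) ((2:ℕ)-1) = 1 from by omega,
        show min ((3:ℕ)-1) ((2:ℕ)-1) = 1 from by omega,
        show max ((3:ℕ)-1) ((2:ℕ)-1) = 2 from by omega]
      push_cast
      linear_combination heq
    · rw [if_neg (by omega),
        show min ((2:ℕ)-1) (b-1) = 1 from by omega,
        show max ((2:ℕ)-1) (b-1) = b-1 from by omega,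
        show min ((3:ℕ)-1) (b-1) = 2 from by omega,
        show max ((3:ℕ)-1) (b-1) = b-1 from by omega]
      push_cast
      ring
  · rw [gE_wx p q r 2 b (by omega) (by omega) (by omega) (by omega),
      gE_wx p q r 0 b (by omega) (by omega) (by omega) (by omega),
      gE_wx p q r 3 b (by omega) (by omega) (by omega) (by omega), if_neg (by omega),
      show ((0:ℕ)-1 : ℕ) = 0 from by omega, show ((2:ℕ)-1:ℕ) = 1 from by omega,
      show ((3:ℕ)-1:ℕ) = 2 from by omega]
    push_cast
    ring

lemma rowWmid (p q r b i : ℕ) (hp : 2 ≤ p) (hpq : p < q) (hqr : q < r)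
    (heq : (p:ℤ)*q + (p:ℤ)*r - (q:ℤ)*r = 1) (hb : b < q+r)
    (hi3 : 3 ≤ i) (hiq : i + 1 ≤ q) :
    2 * greenEnt p q r i b - greenEnt p q r (i-1) b - greenEnt p q r (i+1) b
      = if b = i then 1 else 0 := by
  have hq3 : 3 ≤ q := by omega
  rcases (show b = 1 ∨ (b ≤ q ∧ b ≠ 1) ∨ (q+1 ≤ b) by omega) with hb1 | ⟨hbq, hb1⟩ | hbx
  · subst hb1
    rw [gE_wu p q r i (by omega) (by omega), gE_wu p q r (i-1) (by omega) (by omega),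
      gE_wu p q r (i+1) (by omega) (by omega), if_neg (by omega),
      show ((i-1)-1 : ℕ) = i-2 from by omega,
      show ((i+1)-1 : ℕ) = i from by omega,
      show ((i-1:ℕ):ℤ) = (i:ℤ)-1 from by omega,
      show ((i-2:ℕ):ℤ) = (i:ℤ)-2 from by omega]
    ring
  · rw [gE_ww p q r i b (by omega) (by omega) hb1 hbq,
      gE_ww p q r (i-1) b (by omega) (by omega) hb1 hbq,
      gE_ww p q r (i+1) b (by omega) (by omega) hb1 hbq]
    rcases (show b + 1 ≤ i ∨ b = i ∨ i + 1 ≤ b by omega) with hlt | rfl | hgt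
    · rw [if_neg (by omega),
        show min (i-1) (b-1) = b-1 from by omega,
        show max (i-1) (b-1) = i-1 from by omega,
        show min ((i-1)-1) (b-1) = b-1 from by omega,
        show max ((i-1)-1) (b-1) = i-2 from by omega,
        show min ((i+1)-1) (b-1) = b-1 from by omega,
        show max ((i+1)-1) (b-1) = i from by omega,
        show ((i-1:ℕ):ℤ) = (i:ℤ)-1 from by omega,
        show ((i-2:ℕ):ℤ) = (i:ℤ)-2 from by omega]
      ring
    · rw [if_pos rfl,
        show min (b-1) (b-1) = b-1 from by omega,
        show max (b-1) (b-1) = b-1 from by omega,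
        show min ((b-1)-1) (b-1) = b-2 from by omega,
        show max ((b-1)-1) (b-1) = b-1 from by omega,
        show min ((b+1)-1) (b-1) = b-1 from by omega,
        show max ((b+1)-1) (b-1) = b from by omega,
        show ((b-1:ℕ):ℤ) = (b:ℤ)-1 from by omega,
        show ((b-2:ℕ):ℤ) = (b:ℤ)-2 from by omega]
      linear_combination heq
    · rw [if_neg (by omega),
        show min (i-1) (b-1) = i-1 from by omega,
        show max (i-1) (b-1) = b-1 from by omega,
        show min ((i-1)-1) (b-1) = i-2 from by omega,
        show max ((i-1)-1) (b-1) = b-1 from by omega,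
        show min ((i+1)-1) (b-1) = i from by omega,
        show max ((i+1)-1) (b-1) = b-1 from by omega,
        show ((i-1:ℕ):ℤ) = (i:ℤ)-1 from by omega,
        show ((i-2:ℕ):ℤ) = (i:ℤ)-2 from by omega]
      ring
  · rw [gE_wx p q r i b (by omega) (by omega) (by omega) (by omega),
      gE_wx p q r (i-1) b (by omega) (by omega) (by omega) (by omega),
      gE_wx p q r (i+1) b (by omega) (by omega) (by omega) (by omega), if_neg (by omega),
      show ((i-1)-1 : ℕ) = i-2 from by omega,
      show ((i+1)-1 : ℕ) = i from by omega,
      show ((i-1:ℕ):ℤ) = (i:ℤ)-1 from by omega,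
      show ((i-2:ℕ):ℤ) = (i:ℤ)-2 from by omega]
    ring

lemma rowWend (p q r b : ℕ) (hp : 2 ≤ p) (hpq : p < q) (hqr : q < r)
    (heq : (p:ℤ)*q + (p:ℤ)*r - (q:ℤ)*r = 1) (hb : b < q+r) :
    2 * greenEnt p q r q b - greenEnt p q r (q-1) b = if b = q then 1 else 0 := by
  have hq3 : 3 ≤ q := by omega
  rcases (show b = 1 ∨ (b ≤ q ∧ b ≠ 1) ∨ (q+1 ≤ b) by omega) with hb1 | ⟨hbq, hb1⟩ | hbx
  · subst hb1
    rw [gE_wu p q r q (by omega) (by omega), gE_wu p q r (q-1) (by omega) (by omega),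
      if_neg (by omega),
      show ((q-1)-1 : ℕ) = q-2 from by omega,
      show ((q-1:ℕ):ℤ) = (q:ℤ)-1 from by omega,
      show ((q-2:ℕ):ℤ) = (q:ℤ)-2 from by omega]
    ring
  · rw [gE_ww p q r q b (by omega) (by omega) hb1 hbq,
      gE_ww p q r (q-1) b (by omega) (by omega) hb1 hbq]
    rcases (show b = q ∨ b + 1 ≤ q by omega) with rfl | hlt
    · rw [if_pos rfl,
        show min (b-1) (b-1) = b-1 from by omega,
        show max (b-1) (b-1) = b-1 from by omega,
        show min ((b-1)-1) (b-1) = b-2 from by omega,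
        show max ((b-1)-1) (b-1) = b-1 from by omega,
        show ((b-1:ℕ):ℤ) = (b:ℤ)-1 from by omega,
        show ((b-2:ℕ):ℤ) = (b:ℤ)-2 from by omega]
      linear_combination heq
    · rw [if_neg (by omega),
        show min (q-1) (b-1) = b-1 from by omega,
        show max (q-1) (b-1) = q-1 from by omega,
        show min ((q-1)-1) (b-1) = b-1 from by omega,
        show max ((q-1)-1) (b-1) = q-2 from by omega,
        show ((q-1:ℕ):ℤ) = (q:ℤ)-1 from by omega,
        show ((q-2:ℕ):ℤ) = (q:ℤ)-2 from by omega]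
      ring
  · rw [gE_wx p q r q b (by omega) (by omega) (by omega) (by omega),
      gE_wx p q r (q-1) b (by omega) (by omega) (by omega) (by omega), if_neg (by omega),
      show ((q-1)-1 : ℕ) = q-2 from by omega,
      show ((q-1:ℕ):ℤ) = (q:ℤ)-1 from by omega,
      show ((q-2:ℕ):ℤ) = (q:ℤ)-2 from by omega]
    ring

lemma rowX1 (p q r b : ℕ) (hp : 2 ≤ p) (hpq : p < q) (hqr : q < r)
    (heq : (p:ℤ)*q + (p:ℤ)*r - (q:ℤ)*r = 1) (hb : b < q+r) :
    2 * greenEnt p q r (q+1) b - greenEnt p q r 0 b - greenEnt p q r (q+2) b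
      = if b = q+1 then 1 else 0 := by
  have hq3 : 3 ≤ q := by omega
  have hr4 : 4 ≤ r := by omega
  rcases (show b = 1 ∨ (b ≤ q ∧ b ≠ 1) ∨ (q+1 ≤ b) by omega) with hb1 | ⟨hbq, hb1⟩ | hbx
  · subst hb1
    rw [gE_xu p q r (q+1) (by omega) (by omega), gE_wu p q r 0 (by omega) (by omega),
      gE_xu p q r (q+2) (by omega) (by omega), if_neg (by omega),
      show ((0:ℕ)-1 : ℕ) = 0 from by omega,
      show ((q+1)-q : ℕ) = 1 from by omega, show ((q+2)-q : ℕ) = 2 from by omega]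
    push_cast
    ring
  · rw [gE_xw p q r (q+1) b (by omega) (by omega) hb1 hbq,
      gE_ww p q r 0 b (by omega) (by omega) hb1 hbq,
      gE_xw p q r (q+2) b (by omega) (by omega) hb1 hbq, if_neg (by omega),
      show min ((0:ℕ)-1) (b-1) = 0 from by omega,
      show max ((0:ℕ)-1) (b-1) = b-1 from by omega,
      show ((q+1)-q : ℕ) = 1 from by omega, show ((q+2)-q : ℕ) = 2 from by omega]
    push_cast
    ring
  · rw [gE_xx p q r (q+1) b (by omega) (by omega) (by omega),
      gE_wx p q r 0 b (by omega) (by omega) (by omega) (by omega),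
      gE_xx p q r (q+2) b (by omega) (by omega) (by omega),
      show ((0:ℕ)-1 : ℕ) = 0 from by omega]
    rcases (show b = q+1 ∨ q+2 ≤ b by omega) with rfl | hb2
    · rw [if_pos rfl,
        show min ((q+1)-q) ((q+1)-q) = 1 from by omega,
        show max ((q+1)-q) ((q+1)-q) = 1 from by omega,
        show min ((q+2)-q) ((q+1)-q) = 1 from by omega,
        show max ((q+2)-q) ((q+1)-q) = 2 from by omega,
        show ((q+1)-q : ℕ) = 1 from by omega]
      push_cast
      linear_combination heq
    · rw [if_neg (by omega),
        show min ((q+1)-q) (b-q) = 1 from by omega,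
        show max ((q+1)-q) (b-q) = b-q from by omega,
        show min ((q+2)-q) (b-q) = 2 from by omega,
        show max ((q+2)-q) (b-q) = b-q from by omega]
      push_cast
      ring

lemma rowXmid (p q r b i : ℕ) (hp : 2 ≤ p) (hpq : p < q) (hqr : q < r)
    (heq : (p:ℤ)*q + (p:ℤ)*r - (q:ℤ)*r = 1) (hb : b < q+r)
    (hi3 : q+2 ≤ i) (hiq : i + 1 ≤ q+r-1) :
    2 * greenEnt p q r i b - greenEnt p q r (i-1) b - greenEnt p q r (i+1) b
      = if b = i then 1 else 0 := by
  have hq3 : 3 ≤ q := by omega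
  rcases (show b = 1 ∨ (b ≤ q ∧ b ≠ 1) ∨ (q+1 ≤ b) by omega) with hb1 | ⟨hbq, hb1⟩ | hbx
  · subst hb1
    rw [gE_xu p q r i (by omega) (by omega), gE_xu p q r (i-1) (by omega) (by omega),
      gE_xu p q r (i+1) (by omega) (by omega), if_neg (by omega),
      show ((i-1)-q : ℕ) = i-q-1 from by omega,
      show ((i+1)-q : ℕ) = i-q+1 from by omega,
      show ((i-q-1:ℕ):ℤ) = (i:ℤ)-q-1 from by omega,
      show ((i-q+1:ℕ):ℤ) = (i:ℤ)-q+1 from by omega,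
      show ((i-q:ℕ):ℤ) = (i:ℤ)-q from by omega]
    ring
  · rw [gE_xw p q r i b (by omega) (by omega) hb1 hbq,
      gE_xw p q r (i-1) b (by omega) (by omega) hb1 hbq,
      gE_xw p q r (i+1) b (by omega) (by omega) hb1 hbq, if_neg (by omega),
      show ((i-1)-q : ℕ) = i-q-1 from by omega,
      show ((i+1)-q : ℕ) = i-q+1 from by omega,
      show ((i-q-1:ℕ):ℤ) = (i:ℤ)-q-1 from by omega,
      show ((i-q+1:ℕ):ℤ) = (i:ℤ)-q+1 from by omega,
      show ((i-q:ℕ):ℤ) = (i:ℤ)-q from by omega]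
    ring
  · rw [gE_xx p q r i b (by omega) (by omega) (by omega),
      gE_xx p q r (i-1) b (by omega) (by omega) (by omega),
      gE_xx p q r (i+1) b (by omega) (by omega) (by omega)]
    rcases (show b + 1 ≤ i ∨ b = i ∨ i + 1 ≤ b by omega) with hlt | rfl | hgt
    · rw [if_neg (by omega),
        show min (i-q) (b-q) = b-q from by omega,
        show max (i-q) (b-q) = i-q from by omega,
        show min ((i-1)-q) (b-q) = b-q from by omega,
        show max ((i-1)-q) (b-q) = i-q-1 from by omega,
        show min ((i+1)-q) (b-q) = b-q from by omega,
        show max ((i+1)-q) (b-q) = i-q+1 from by omega,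
        show ((i-q-1:ℕ):ℤ) = (i:ℤ)-q-1 from by omega,
        show ((i-q+1:ℕ):ℤ) = (i:ℤ)-q+1 from by omega,
        show ((i-q:ℕ):ℤ) = (i:ℤ)-q from by omega]
      ring
    · rw [if_pos rfl,
        show min (b-q) (b-q) = b-q from by omega,
        show max (b-q) (b-q) = b-q from by omega,
        show min ((b-1)-q) (b-q) = b-q-1 from by omega,
        show max ((b-1)-q) (b-q) = b-q from by omega,
        show min ((b+1)-q) (b-q) = b-q from by omega,
        show max ((b+1)-q) (b-q) = b-q+1 from by omega,
        show ((b-q-1:ℕ):ℤ) = (b:ℤ)-q-1 from by omega,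
        show ((b-q+1:ℕ):ℤ) = (b:ℤ)-q+1 from by omega,
        show ((b-q:ℕ):ℤ) = (b:ℤ)-q from by omega]
      linear_combination heq
    · rw [if_neg (by omega),
        show min (i-q) (b-q) = i-q from by omega,
        show max (i-q) (b-q) = b-q from by omega,
        show min ((i-1)-q) (b-q) = i-q-1 from by omega,
        show max ((i-1)-q) (b-q) = b-q from by omega,
        show min ((i+1)-q) (b-q) = i-q+1 from by omega,
        show max ((i+1)-q) (b-q) = b-q from by omega,
        show ((i-q-1:ℕ):ℤ) = (i:ℤ)-q-1 from by omega,
        show ((i-q+1:ℕ):ℤ) = (i:ℤ)-q+1 from by omega,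
        show ((i-q:ℕ):ℤ) = (i:ℤ)-q from by omega]
      ring

lemma rowXend (p q r b : ℕ) (hp : 2 ≤ p) (hpq : p < q) (hqr : q < r)
    (heq : (p:ℤ)*q + (p:ℤ)*r - (q:ℤ)*r = 1) (hb : b < q+r) :
    2 * greenEnt p q r (q+r-1) b - greenEnt p q r (q+r-2) b
      = if b = q+r-1 then 1 else 0 := by
  have hq3 : 3 ≤ q := by omega
  have hr4 : 4 ≤ r := by omega
  rcases (show b = 1 ∨ (b ≤ q ∧ b ≠ 1) ∨ (q+1 ≤ b) by omega) with hb1 | ⟨hbq, hb1⟩ | hbx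
  · subst hb1
    rw [gE_xu p q r (q+r-1) (by omega) (by omega), gE_xu p q r (q+r-2) (by omega) (by omega),
      if_neg (by omega),
      show ((q+r-1)-q : ℕ) = r-1 from by omega,
      show ((q+r-2)-q : ℕ) = r-2 from by omega,
      show ((r-1:ℕ):ℤ) = (r:ℤ)-1 from by omega,
      show ((r-2:ℕ):ℤ) = (r:ℤ)-2 from by omega]
    ring
  · rw [gE_xw p q r (q+r-1) b (by omega) (by omega) hb1 hbq,
      gE_xw p q r (q+r-2) b (by omega) (by omega) hb1 hbq, if_neg (by omega),
      show ((q+r-1)-q : ℕ) = r-1 from by omega,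
      show ((q+r-2)-q : ℕ) = r-2 from by omega,
      show ((r-1:ℕ):ℤ) = (r:ℤ)-1 from by omega,
      show ((r-2:ℕ):ℤ) = (r:ℤ)-2 from by omega]
    ring
  · rw [gE_xx p q r (q+r-1) b (by omega) (by omega) (by omega),
      gE_xx p q r (q+r-2) b (by omega) (by omega) (by omega)]
    rcases (show b = q+r-1 ∨ b + 1 ≤ q+r-1 by omega) with rfl | hlt
    · rw [if_pos rfl,
        show min ((q+r-1)-q) ((q+r-1)-q) = r-1 from by omega,
        show max ((q+r-1)-q) ((q+r-1)-q) = r-1 from by omega,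
        show min ((q+r-2)-q) ((q+r-1)-q) = r-2 from by omega,
        show max ((q+r-2)-q) ((q+r-1)-q) = r-1 from by omega,
        show ((r-1:ℕ):ℤ) = (r:ℤ)-1 from by omega,
        show ((r-2:ℕ):ℤ) = (r:ℤ)-2 from by omega]
      linear_combination heq
    · rw [if_neg (by omega),
        show min ((q+r-1)-q) (b-q) = b-q from by omega,
        show max ((q+r-1)-q) (b-q) = r-1 from by omega,
        show min ((q+r-2)-q) (b-q) = b-q from by omega,
        show max ((q+r-2)-q) (b-q) = r-2 from by omega,
        show ((r-1:ℕ):ℤ) = (r:ℤ)-1 from by omega,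
        show ((r-2:ℕ):ℤ) = (r:ℤ)-2 from by omega]
      ring

lemma posdef_of_posvec {n : ℕ} (M : Matrix (Fin n) (Fin n) ℝ)
    (hsym : ∀ i j, M i j = M j i)
    (hoff : ∀ i j, i ≠ j → M i j ≤ 0)
    (v : Fin n → ℝ) (hv : ∀ i, 0 < v i)
    (hMv : ∀ i, 0 < (M.mulVec v) i) : M.PosDef := by
  refine Matrix.posDef_iff_dotProduct_mulVec.mpr ⟨?_, ?_⟩
  · ext i j
    simp only [Matrix.conjTranspose_apply, RCLike.star_def, Matrix.map_apply]
    simpa using hsym j i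
  · intro x hx
    have hstar : star x = x := by
      funext i; simp
    rw [hstar]
    set y : Fin n → ℝ := fun i => x i / v i with hy
    have hxy : ∀ i, x i = v i * y i := by
      intro i
      rw [hy]
      rw [mul_div_assoc', mul_comm, mul_div_assoc, div_self (hv i).ne', mul_one]
    have expand : dotProduct x (M.mulVec x)
        = ∑ i, ∑ j, M i j * (v i * y i) * (v j * y j) := by
      simp only [dotProduct, Matrix.mulVec, Finset.mul_sum]
      refine Finset.sum_congr rfl fun i _ => Finset.sum_congr rfl fun j _ => ?_
      rw [hxy i, hxy j]
      ring
    have key : ∀ i j, M i j * (v i * v j) * ((y i)^2 + (y j)^2) / 2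
        ≤ M i j * (v i * y i) * (v j * y j) := by
      intro i j
      rcases eq_or_ne i j with rfl | hij
      · apply le_of_eq; ring
      · have h1 : M i j * (v i * v j) ≤ 0 :=
          mul_nonpos_of_nonpos_of_nonneg (hoff i j hij) (le_of_lt (mul_pos (hv i) (hv j)))
        nlinarith [sq_nonneg (y i - y j)]
    have swap : ∑ i, ∑ j, M i j * (v i * v j) * (y j ^ 2)
        = ∑ i, ∑ j, M i j * (v i * v j) * (y i ^ 2) := by
      rw [Finset.sum_comm]
      refine Finset.sum_congr rfl fun i _ => Finset.sum_congr rfl fun j _ => ?_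
      rw [hsym j i]
      ring
    have split : ∑ i, ∑ j, M i j * (v i * v j) * ((y i)^2 + (y j)^2) / 2
        = ∑ i, (v i * (M.mulVec v) i) * (y i)^2 := by
      have e1 : ∀ i j, M i j * (v i * v j) * ((y i)^2 + (y j)^2) / 2
          = (M i j * (v i * v j) * (y i ^2)) / 2 + (M i j * (v i * v j) * (y j ^2)) / 2 :=
        fun i j => by ring
      simp only [e1, Finset.sum_add_distrib, ← Finset.sum_div]
      rw [swap]
      rw [show ∀ a : ℝ, a / 2 + a / 2 = a from fun a => by ring]
      refine Finset.sum_congr rfl fun i _ => ?_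
      simp only [Matrix.mulVec, dotProduct, Finset.mul_sum, Finset.sum_mul]
      exact Finset.sum_congr rfl fun j _ => by ring
    have hle : ∑ i, (v i * M.mulVec v i) * y i ^ 2
        ≤ ∑ i, ∑ j, M i j * (v i * y i) * (v j * y j) := by
      rw [← split]
      exact Finset.sum_le_sum fun i _ => Finset.sum_le_sum fun j _ => key i j
    have hpos : 0 < ∑ i, (v i * M.mulVec v i) * y i ^ 2 := by
      obtain ⟨i0, hi0⟩ := Function.ne_iff.mp hx
      have hx0 : x i0 ≠ 0 := by simpa using hi0
      refine Finset.sum_pos' (fun i _ => ?_) ⟨i0, Finset.mem_univ _, ?_⟩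
      · exact mul_nonneg (mul_nonneg (hv i).le (hMv i).le) (sq_nonneg _)
      · have hy0 : y i0 ≠ 0 := div_ne_zero hx0 (hv i0).ne'
        have hsq : 0 < y i0 ^ 2 := lt_of_le_of_ne (sq_nonneg _) (Ne.symm (pow_ne_zero 2 hy0))
        exact mul_pos (mul_pos (hv i0) (hMv i0)) hsq
    rw [expand]
    linarith

lemma greenNonneg (p q r a b : ℕ) (hp : 2 ≤ p) (hpq : p < q) (hqr : q < r)
    (heq : (p:ℤ)*q + (p:ℤ)*r - (q:ℤ)*r = 1) (ha : a < q+r) (hb : b < q+r) :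
    0 ≤ greenEnt p q r a b := by
  have hq3 : 3 ≤ q := by omega
  unfold greenEnt
  split_ifs with h1 h2 h3 h4 h5 h6 h7 h8
  · positivity
  · have e1 : ((b-1:ℕ):ℤ) ≤ (q:ℤ) - 1 := by omega
    have : (0:ℤ) ≤ (q:ℤ) - ((b-1:ℕ):ℤ) := by omega
    positivity
  · have : (0:ℤ) ≤ (r:ℤ) - ((b-q:ℕ):ℤ) := by omega
    positivity
  · have : (0:ℤ) ≤ (q:ℤ) - ((a-1:ℕ):ℤ) := by omega
    positivity
  · -- w w
    refine mul_nonneg ?_ (by omega)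
    have hA : (0:ℤ) ≤ ((q:ℤ) - 1 - ((min (a-1) (b-1):ℕ):ℤ)) * ((r:ℤ) - (p:ℤ)) :=
      mul_nonneg (by omega) (by omega)
    nlinarith [hA, heq]
  · refine mul_nonneg (mul_nonneg (by positivity) (by omega)) (by omega)
  · have : (0:ℤ) ≤ (r:ℤ) - ((a-q:ℕ):ℤ) := by omega
    positivity
  · refine mul_nonneg (mul_nonneg (by positivity) (by omega)) (by omega)
  · -- x x
    refine mul_nonneg ?_ (by omega)
    have hA : (0:ℤ) ≤ ((r:ℤ) - 1 - ((min (a-q) (b-q):ℕ):ℤ)) * ((q:ℤ) - (p:ℤ)) :=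
      mul_nonneg (by omega) (by omega)
    nlinarith [hA, heq]

lemma greenDiagPos (p q r a : ℕ) (hp : 2 ≤ p) (hpq : p < q) (hqr : q < r)
    (heq : (p:ℤ)*q + (p:ℤ)*r - (q:ℤ)*r = 1) (ha : a < q+r) :
    0 < greenEnt p q r a a := by
  have hq3 : 3 ≤ q := by omega
  unfold greenEnt
  split_ifs with h1 h2
  · positivity
  · refine mul_pos ?_ (by omega)
    have hA : (0:ℤ) ≤ ((q:ℤ) - 1 - ((min (a-1) (a-1):ℕ):ℤ)) * ((r:ℤ) - (p:ℤ)) :=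
      mul_nonneg (by omega) (by omega)
    nlinarith [hA, heq]
  · refine mul_pos ?_ (by omega)
    have hA : (0:ℤ) ≤ ((r:ℤ) - 1 - ((min (a-q) (a-q):ℕ):ℤ)) * ((q:ℤ) - (p:ℤ)) :=
      mul_nonneg (by omega) (by omega)
    nlinarith [hA, heq]


def nMat (p q r : ℕ) : Matrix (Fin (q+r)) (Fin (q+r)) ℤ :=
  Matrix.of fun a b => greenEnt p q r a.val b.val

lemma inter_symm {p q r : ℕ} (i j : Fin (q+r)) :
    interMatrix p q r i j = interMatrix p q r j i := by
  unfold interMatrix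
  simp only [Matrix.of_apply]
  rcases eq_or_ne i j with rfl | h
  · rfl
  · rw [if_neg h, if_neg (Ne.symm h)]
    exact if_congr or_comm rfl rfl

lemma inter_offdiag_nonneg {p q r : ℕ} (i j : Fin (q+r)) (h : i ≠ j) :
    0 ≤ interMatrix p q r i j := by
  unfold interMatrix
  simp only [Matrix.of_apply, if_neg h]
  split_ifs <;> norm_num

lemma prodId (p q r : ℕ) (hp : 2 ≤ p) (hpq : p < q) (hqr : q < r)
    (heq : (p:ℤ)*q + (p:ℤ)*r - (q:ℤ)*r = 1) :
    (-(interMatrix p q r)) * nMat p q r = 1 := by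
  have hq3 : 3 ≤ q := by omega
  have hr4 : 4 ≤ r := by omega
  ext a b
  rw [Matrix.mul_apply, Matrix.one_apply,
    if_congr (Iff.intro (fun h => (congrArg Fin.val h).symm) (fun h => Fin.ext h.symm))
      rfl rfl]
  rcases (show (a:ℕ) = 0 ∨ (a:ℕ) = 1 ∨ (a:ℕ) = 2 ∨ (3 ≤ (a:ℕ) ∧ (a:ℕ)+1 ≤ q) ∨ (a:ℕ) = q
      ∨ (a:ℕ) = q+1 ∨ (q+2 ≤ (a:ℕ) ∧ (a:ℕ)+1 ≤ q+r-1) ∨ (a:ℕ) = q+r-1 from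
      by have := a.isLt; omega) with
    ha | ha | ha | ⟨ha1, ha2⟩ | ha | ha | ⟨ha1, ha2⟩ | ha
  · -- row 0
    have hz : ∀ j : Fin (q+r), j ≠ a → j ≠ ⟨1, by omega⟩ → j ≠ ⟨2, by omega⟩ →
        j ≠ ⟨q+1, by omega⟩ →
        (-(interMatrix p q r)) a j * nMat p q r j b = 0 := by
      intro j h1 h2 h3 h4
      have w1 : (j:ℕ) ≠ (a:ℕ) := fun hh => h1 (Fin.ext hh)
      have w2 : (j:ℕ) ≠ 1 := fun hh => h2 (Fin.ext hh)
      have w3 : (j:ℕ) ≠ 2 := fun hh => h3 (Fin.ext hh)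
      have w4 : (j:ℕ) ≠ q+1 := fun hh => h4 (Fin.ext hh)
      rw [Matrix.neg_apply,
        inter_zero _ _ (show (a:ℕ) ≠ (j:ℕ) from by omega)
          (show ¬ adjP q (a:ℕ) (j:ℕ) from by unfold adjP; omega),
        neg_zero, zero_mul]
    rw [sum_eq_four _ a ⟨1, by omega⟩ ⟨2, by omega⟩ ⟨q+1, by omega⟩
      (Fin.ne_of_val_ne (show (a:ℕ) ≠ 1 from by omega))
      (Fin.ne_of_val_ne (show (a:ℕ) ≠ 2 from by omega))
      (Fin.ne_of_val_ne (show (a:ℕ) ≠ q+1 from by omega))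
      (Fin.ne_of_val_ne (show (1:ℕ) ≠ 2 from by omega))
      (Fin.ne_of_val_ne (show (1:ℕ) ≠ q+1 from by omega))
      (Fin.ne_of_val_ne (show (2:ℕ) ≠ q+1 from by omega)) hz,
      Matrix.neg_apply, Matrix.neg_apply, Matrix.neg_apply, Matrix.neg_apply,
      inter_diag,
      inter_one a ⟨1, by omega⟩ (show (a:ℕ) ≠ 1 from by omega)
        (show adjP q (a:ℕ) 1 from by unfold adjP; omega),
      inter_one a ⟨2, by omega⟩ (show (a:ℕ) ≠ 2 from by omega)
        (show adjP q (a:ℕ) 2 from by unfold adjP; omega),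
      inter_one a ⟨q+1, by omega⟩ (show (a:ℕ) ≠ q+1 from by omega)
        (show adjP q (a:ℕ) (q+1) from by unfold adjP; omega),
      if_neg (show ¬ (a:ℕ) = 1 from by omega)]
    show -(-2) * greenEnt p q r (a:ℕ) (b:ℕ) + -1 * greenEnt p q r 1 (b:ℕ)
        + -1 * greenEnt p q r 2 (b:ℕ) + -1 * greenEnt p q r (q+1) (b:ℕ)
        = if (b:ℕ) = (a:ℕ) then 1 else 0
    rw [ha]
    linarith [rowC p q r (b:ℕ) hp hpq hqr heq b.isLt]
  · -- row 1
    have hz : ∀ j : Fin (q+r), j ≠ a → j ≠ ⟨0, by omega⟩ →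
        (-(interMatrix p q r)) a j * nMat p q r j b = 0 := by
      intro j h1 h2
      have w1 : (j:ℕ) ≠ (a:ℕ) := fun hh => h1 (Fin.ext hh)
      have w2 : (j:ℕ) ≠ 0 := fun hh => h2 (Fin.ext hh)
      rw [Matrix.neg_apply,
        inter_zero _ _ (show (a:ℕ) ≠ (j:ℕ) from by omega)
          (show ¬ adjP q (a:ℕ) (j:ℕ) from by unfold adjP; omega),
        neg_zero, zero_mul]
    rw [sum_eq_two _ a ⟨0, by omega⟩
      (Fin.ne_of_val_ne (show (a:ℕ) ≠ 0 from by omega)) hz,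
      Matrix.neg_apply, Matrix.neg_apply, inter_diag,
      inter_one a ⟨0, by omega⟩ (show (a:ℕ) ≠ 0 from by omega)
        (show adjP q (a:ℕ) 0 from by unfold adjP; omega),
      if_pos (show (a:ℕ) = 1 from ha)]
    show -(-(p:ℤ)) * greenEnt p q r (a:ℕ) (b:ℕ) + -1 * greenEnt p q r 0 (b:ℕ)
        = if (b:ℕ) = (a:ℕ) then 1 else 0
    rw [ha]
    linarith [rowU p q r (b:ℕ) hp hpq hqr heq b.isLt]
  · -- row 2
    have hz : ∀ j : Fin (q+r), j ≠ a → j ≠ ⟨0, by omega⟩ → j ≠ ⟨3, by omega⟩ →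
        (-(interMatrix p q r)) a j * nMat p q r j b = 0 := by
      intro j h1 h2 h3
      have w1 : (j:ℕ) ≠ (a:ℕ) := fun hh => h1 (Fin.ext hh)
      have w2 : (j:ℕ) ≠ 0 := fun hh => h2 (Fin.ext hh)
      have w3 : (j:ℕ) ≠ 3 := fun hh => h3 (Fin.ext hh)
      rw [Matrix.neg_apply,
        inter_zero _ _ (show (a:ℕ) ≠ (j:ℕ) from by omega)
          (show ¬ adjP q (a:ℕ) (j:ℕ) from by unfold adjP; omega),
        neg_zero, zero_mul]
    rw [sum_eq_three _ a ⟨0, by omega⟩ ⟨3, by omega⟩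
      (Fin.ne_of_val_ne (show (a:ℕ) ≠ 0 from by omega))
      (Fin.ne_of_val_ne (show (a:ℕ) ≠ 3 from by omega))
      (Fin.ne_of_val_ne (show (0:ℕ) ≠ 3 from by omega)) hz,
      Matrix.neg_apply, Matrix.neg_apply, Matrix.neg_apply, inter_diag,
      inter_one a ⟨0, by omega⟩ (show (a:ℕ) ≠ 0 from by omega)
        (show adjP q (a:ℕ) 0 from by unfold adjP; omega),
      inter_one a ⟨3, by omega⟩ (show (a:ℕ) ≠ 3 from by omega)
        (show adjP q (a:ℕ) 3 from by unfold adjP; omega),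
      if_neg (show ¬ (a:ℕ) = 1 from by omega)]
    show -(-2) * greenEnt p q r (a:ℕ) (b:ℕ) + -1 * greenEnt p q r 0 (b:ℕ)
        + -1 * greenEnt p q r 3 (b:ℕ) = if (b:ℕ) = (a:ℕ) then 1 else 0
    rw [ha]
    linarith [rowW2 p q r (b:ℕ) hp hpq hqr heq b.isLt]
  · -- row interior w
    have hz : ∀ j : Fin (q+r), j ≠ ⟨(a:ℕ)-1, by omega⟩ → j ≠ a → j ≠ ⟨(a:ℕ)+1, by omega⟩ →
        (-(interMatrix p q r)) a j * nMat p q r j b = 0 := by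
      intro j h1 h2 h3
      have w1 : (j:ℕ) ≠ (a:ℕ)-1 := fun hh => h1 (Fin.ext hh)
      have w2 : (j:ℕ) ≠ (a:ℕ) := fun hh => h2 (Fin.ext hh)
      have w3 : (j:ℕ) ≠ (a:ℕ)+1 := fun hh => h3 (Fin.ext hh)
      rw [Matrix.neg_apply,
        inter_zero _ _ (show (a:ℕ) ≠ (j:ℕ) from by omega)
          (show ¬ adjP q (a:ℕ) (j:ℕ) from by unfold adjP; omega),
        neg_zero, zero_mul]
    rw [sum_eq_three _ ⟨(a:ℕ)-1, by omega⟩ a ⟨(a:ℕ)+1, by omega⟩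
      (Fin.ne_of_val_ne (show (a:ℕ)-1 ≠ (a:ℕ) from by omega))
      (Fin.ne_of_val_ne (show (a:ℕ)-1 ≠ (a:ℕ)+1 from by omega))
      (Fin.ne_of_val_ne (show (a:ℕ) ≠ (a:ℕ)+1 from by omega)) hz,
      Matrix.neg_apply, Matrix.neg_apply, Matrix.neg_apply, inter_diag,
      inter_one a ⟨(a:ℕ)-1, by omega⟩ (show (a:ℕ) ≠ (a:ℕ)-1 from by omega)
        (show adjP q (a:ℕ) ((a:ℕ)-1) from by unfold adjP; omega),
      inter_one a ⟨(a:ℕ)+1, by omega⟩ (show (a:ℕ) ≠ (a:ℕ)+1 from by omega)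
        (show adjP q (a:ℕ) ((a:ℕ)+1) from by unfold adjP; omega),
      if_neg (show ¬ (a:ℕ) = 1 from by omega)]
    show -1 * greenEnt p q r ((a:ℕ)-1) (b:ℕ) + -(-2) * greenEnt p q r (a:ℕ) (b:ℕ)
        + -1 * greenEnt p q r ((a:ℕ)+1) (b:ℕ) = if (b:ℕ) = (a:ℕ) then 1 else 0
    linarith [rowWmid p q r (b:ℕ) (a:ℕ) hp hpq hqr heq b.isLt ha1 ha2]
  · -- row q (end of w arm)
    have hz : ∀ j : Fin (q+r), j ≠ a → j ≠ ⟨q-1, by omega⟩ →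
        (-(interMatrix p q r)) a j * nMat p q r j b = 0 := by
      intro j h1 h2
      have w1 : (j:ℕ) ≠ (a:ℕ) := fun hh => h1 (Fin.ext hh)
      have w2 : (j:ℕ) ≠ q-1 := fun hh => h2 (Fin.ext hh)
      rw [Matrix.neg_apply,
        inter_zero _ _ (show (a:ℕ) ≠ (j:ℕ) from by omega)
          (show ¬ adjP q (a:ℕ) (j:ℕ) from by unfold adjP; omega),
        neg_zero, zero_mul]
    rw [sum_eq_two _ a ⟨q-1, by omega⟩
      (Fin.ne_of_val_ne (show (a:ℕ) ≠ q-1 from by omega)) hz,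
      Matrix.neg_apply, Matrix.neg_apply, inter_diag,
      inter_one a ⟨q-1, by omega⟩ (show (a:ℕ) ≠ q-1 from by omega)
        (show adjP q (a:ℕ) (q-1) from by unfold adjP; omega),
      if_neg (show ¬ (a:ℕ) = 1 from by omega)]
    show -(-2) * greenEnt p q r (a:ℕ) (b:ℕ) + -1 * greenEnt p q r (q-1) (b:ℕ)
        = if (b:ℕ) = (a:ℕ) then 1 else 0
    rw [ha]
    linarith [rowWend p q r (b:ℕ) hp hpq hqr heq b.isLt]
  · -- row q+1
    have hz : ∀ j : Fin (q+r), j ≠ a → j ≠ ⟨0, by omega⟩ → j ≠ ⟨q+2, by omega⟩ →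
        (-(interMatrix p q r)) a j * nMat p q r j b = 0 := by
      intro j h1 h2 h3
      have w1 : (j:ℕ) ≠ (a:ℕ) := fun hh => h1 (Fin.ext hh)
      have w2 : (j:ℕ) ≠ 0 := fun hh => h2 (Fin.ext hh)
      have w3 : (j:ℕ) ≠ q+2 := fun hh => h3 (Fin.ext hh)
      rw [Matrix.neg_apply,
        inter_zero _ _ (show (a:ℕ) ≠ (j:ℕ) from by omega)
          (show ¬ adjP q (a:ℕ) (j:ℕ) from by unfold adjP; omega),
        neg_zero, zero_mul]
    rw [sum_eq_three _ a ⟨0, by omega⟩ ⟨q+2, by omega⟩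
      (Fin.ne_of_val_ne (show (a:ℕ) ≠ 0 from by omega))
      (Fin.ne_of_val_ne (show (a:ℕ) ≠ q+2 from by omega))
      (Fin.ne_of_val_ne (show (0:ℕ) ≠ q+2 from by omega)) hz,
      Matrix.neg_apply, Matrix.neg_apply, Matrix.neg_apply, inter_diag,
      inter_one a ⟨0, by omega⟩ (show (a:ℕ) ≠ 0 from by omega)
        (show adjP q (a:ℕ) 0 from by unfold adjP; omega),
      inter_one a ⟨q+2, by omega⟩ (show (a:ℕ) ≠ q+2 from by omega)
        (show adjP q (a:ℕ) (q+2) from by unfold adjP; omega),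
      if_neg (show ¬ (a:ℕ) = 1 from by omega)]
    show -(-2) * greenEnt p q r (a:ℕ) (b:ℕ) + -1 * greenEnt p q r 0 (b:ℕ)
        + -1 * greenEnt p q r (q+2) (b:ℕ) = if (b:ℕ) = (a:ℕ) then 1 else 0
    rw [ha]
    linarith [rowX1 p q r (b:ℕ) hp hpq hqr heq b.isLt]
  · -- row interior x
    have hz : ∀ j : Fin (q+r), j ≠ ⟨(a:ℕ)-1, by omega⟩ → j ≠ a → j ≠ ⟨(a:ℕ)+1, by omega⟩ →
        (-(interMatrix p q r)) a j * nMat p q r j b = 0 := by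
      intro j h1 h2 h3
      have w1 : (j:ℕ) ≠ (a:ℕ)-1 := fun hh => h1 (Fin.ext hh)
      have w2 : (j:ℕ) ≠ (a:ℕ) := fun hh => h2 (Fin.ext hh)
      have w3 : (j:ℕ) ≠ (a:ℕ)+1 := fun hh => h3 (Fin.ext hh)
      rw [Matrix.neg_apply,
        inter_zero _ _ (show (a:ℕ) ≠ (j:ℕ) from by omega)
          (show ¬ adjP q (a:ℕ) (j:ℕ) from by unfold adjP; omega),
        neg_zero, zero_mul]
    rw [sum_eq_three _ ⟨(a:ℕ)-1, by omega⟩ a ⟨(a:ℕ)+1, by omega⟩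
      (Fin.ne_of_val_ne (show (a:ℕ)-1 ≠ (a:ℕ) from by omega))
      (Fin.ne_of_val_ne (show (a:ℕ)-1 ≠ (a:ℕ)+1 from by omega))
      (Fin.ne_of_val_ne (show (a:ℕ) ≠ (a:ℕ)+1 from by omega)) hz,
      Matrix.neg_apply, Matrix.neg_apply, Matrix.neg_apply, inter_diag,
      inter_one a ⟨(a:ℕ)-1, by omega⟩ (show (a:ℕ) ≠ (a:ℕ)-1 from by omega)
        (show adjP q (a:ℕ) ((a:ℕ)-1) from by unfold adjP; omega),
      inter_one a ⟨(a:ℕ)+1, by omega⟩ (show (a:ℕ) ≠ (a:ℕ)+1 from by omega)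
        (show adjP q (a:ℕ) ((a:ℕ)+1) from by unfold adjP; omega),
      if_neg (show ¬ (a:ℕ) = 1 from by omega)]
    show -1 * greenEnt p q r ((a:ℕ)-1) (b:ℕ) + -(-2) * greenEnt p q r (a:ℕ) (b:ℕ)
        + -1 * greenEnt p q r ((a:ℕ)+1) (b:ℕ) = if (b:ℕ) = (a:ℕ) then 1 else 0
    linarith [rowXmid p q r (b:ℕ) (a:ℕ) hp hpq hqr heq b.isLt ha1 ha2]
  · -- row q+r-1
    have hz : ∀ j : Fin (q+r), j ≠ a → j ≠ ⟨q+r-2, by omega⟩ →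
        (-(interMatrix p q r)) a j * nMat p q r j b = 0 := by
      intro j h1 h2
      have w1 : (j:ℕ) ≠ (a:ℕ) := fun hh => h1 (Fin.ext hh)
      have w2 : (j:ℕ) ≠ q+r-2 := fun hh => h2 (Fin.ext hh)
      have wlt := j.isLt
      rw [Matrix.neg_apply,
        inter_zero _ _ (show (a:ℕ) ≠ (j:ℕ) from by omega)
          (show ¬ adjP q (a:ℕ) (j:ℕ) from by unfold adjP; omega),
        neg_zero, zero_mul]
    rw [sum_eq_two _ a ⟨q+r-2, by omega⟩
      (Fin.ne_of_val_ne (show (a:ℕ) ≠ q+r-2 from by omega)) hz,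
      Matrix.neg_apply, Matrix.neg_apply, inter_diag,
      inter_one a ⟨q+r-2, by omega⟩ (show (a:ℕ) ≠ q+r-2 from by omega)
        (show adjP q (a:ℕ) (q+r-2) from by unfold adjP; omega),
      if_neg (show ¬ (a:ℕ) = 1 from by omega)]
    show -(-2) * greenEnt p q r (a:ℕ) (b:ℕ) + -1 * greenEnt p q r (q+r-2) (b:ℕ)
        = if (b:ℕ) = (a:ℕ) then 1 else 0
    rw [ha]
    linarith [rowXend p q r (b:ℕ) hp hpq hqr heq b.isLt]

/-- Let `p, q, r` be pairwise relatively prime positive integers with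
`p < q < r` satisfying `pq + pr − qr = 1`, and let `I` be the intersection matrix of
`G(p,q,r)`. Then `I` is negative definite and `det I = (−1)^{q+r}`; in particular
`|det I| = 1`. -/
theorem stmt_5 (p q r : ℕ) (hp : 0 < p) (hpq : p < q) (hqr : q < r)
    (hcopq : Nat.Coprime p q) (hcopr : Nat.Coprime p r) (hcoqr : Nat.Coprime q r)
    (heq : (p : ℤ) * q + (p : ℤ) * r - (q : ℤ) * r = 1) :
    (-(interMatrix p q r).map ((↑) : ℤ → ℝ)).PosDef ∧
    (interMatrix p q r).det = (-1) ^ (q + r) ∧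
    |(interMatrix p q r).det| = 1 := by
  have hp2 : 2 ≤ p := by
    rcases (show 2 ≤ p ∨ p = 1 from by omega) with h | h
    · exact h
    · exfalso
      subst h
      have c1 : (2:ℤ) ≤ (q:ℤ) := by exact_mod_cast hpq
      have c2 : (q:ℤ) < (r:ℤ) := by exact_mod_cast hqr
      push_cast at heq
      nlinarith [heq]
  have hq3 : 3 ≤ q := by omega
  have hprod : (-(interMatrix p q r)) * nMat p q r = 1 := prodId p q r hp2 hpq hqr heq
  -- the real matrix in the statement equals the map of the negated matrix
  have hmap : -(interMatrix p q r).map ((↑) : ℤ → ℝ)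
      = (-(interMatrix p q r)).map ((↑) : ℤ → ℝ) := by
    ext i j
    simp [Matrix.map_apply]
  -- the positive vector
  set w : Fin (q+r) → ℤ := (nMat p q r).mulVec (fun _ => 1) with hw
  have hwpos : ∀ i, 0 < w i := by
    intro i
    rw [hw]
    simp only [Matrix.mulVec, dotProduct, mul_one]
    refine Finset.sum_pos' (fun j _ => ?_) ⟨i, Finset.mem_univ _, ?_⟩
    · exact greenNonneg p q r i j hp2 hpq hqr heq i.isLt j.isLt
    · exact greenDiagPos p q r i hp2 hpq hqr heq i.isLt
  have hMw : (-(interMatrix p q r)).mulVec w = fun _ => 1 := by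
    rw [hw, Matrix.mulVec_mulVec, hprod]
    funext i
    simp [Matrix.mulVec, dotProduct, Matrix.one_apply]
  have hpd : (-(interMatrix p q r).map ((↑) : ℤ → ℝ)).PosDef := by
    rw [hmap]
    refine posdef_of_posvec _ ?_ ?_ (fun i => ((w i : ℤ) : ℝ)) ?_ ?_
    · intro i j
      simp only [Matrix.map_apply, Matrix.neg_apply]
      rw [inter_symm]
    · intro i j hij
      simp only [Matrix.map_apply, Matrix.neg_apply]
      have h0 : (0:ℤ) ≤ interMatrix p q r i j := inter_offdiag_nonneg i j hij
      have : (0:ℝ) ≤ ((interMatrix p q r i j : ℤ) : ℝ) := by exact_mod_cast h0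
      simpa using neg_nonpos.mpr this
    · intro i
      show (0:ℝ) < ((w i : ℤ) : ℝ)
      exact_mod_cast hwpos i
    · intro i
      have e : (((-(interMatrix p q r)).map ((↑) : ℤ → ℝ)).mulVec
          (fun i => ((w i : ℤ) : ℝ))) i = (((-(interMatrix p q r)).mulVec w i : ℤ) : ℝ) := by
        simp only [Matrix.mulVec, dotProduct, Matrix.map_apply]
        push_cast
        rfl
      rw [e, hMw]
      norm_num
  have hdetprod : (-(interMatrix p q r)).det * (nMat p q r).det = 1 := by
    rw [← Matrix.det_mul, hprod, Matrix.det_one]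
  have hdp : (0:ℝ) < (((-(interMatrix p q r)).det : ℤ) : ℝ) := by
    have h1 := hpd.det_pos
    rw [hmap] at h1
    exact lt_of_lt_of_eq h1 (RingHom.map_det (Int.castRingHom ℝ) (-(interMatrix p q r))).symm
  have hdppos : 0 < (-(interMatrix p q r)).det := by exact_mod_cast hdp
  have hdet1 : (-(interMatrix p q r)).det = 1 := by
    rcases Int.isUnit_iff.mp (IsUnit.of_mul_eq_one _ hdetprod) with h | h
    · exact h
    · omega
  have hdet : (interMatrix p q r).det = (-1)^(q+r) := by
    have e : interMatrix p q r = -(-(interMatrix p q r)) := by rw [neg_neg]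
    rw [e, Matrix.det_neg, hdet1, Fintype.card_fin, mul_one]
  refine ⟨hpd, hdet, ?_⟩
  rw [hdet]
  rw [abs_pow]
  norm_num
end

section
/- Let p, q, r be pairwise relatively prime positive integers with p < q < r, p odd, satisfying pq + pr − qr = 1, and let I be the intersection matrix of G(p,q,r), regarded as a matrix over ℚ. Then the inverse matrix I⁻¹ satisfies: (I⁻¹)_{u,u} = −(q+r); and for every integer m with 1 ≤ m ≤ (p−1)/2, writing v = x_{r−m} (the m-th vertex of the x-path counted from its free end), (I⁻¹)_{u,v} = −qm and (I⁻¹)_{v,v} = −(q−p)m² − m. -/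
namespace Stmt6

def F (p q r a b : ℕ) : ℚ :=
  if a = 0 then
    if b = 0 then -((p:ℚ)*q*r)
    else if b = 1 then -((q:ℚ)*(r:ℚ))
    else if b ≤ q then -((p:ℚ)*(r:ℚ))*((q:ℚ)+1-(b:ℚ))
    else -((p:ℚ)*(q:ℚ))*((q:ℚ)+(r:ℚ)-(b:ℚ))
  else if a = 1 then
    if b = 1 then -((q:ℚ)+(r:ℚ))
    else if b ≤ q then -(r:ℚ)*((q:ℚ)+1-(b:ℚ))
    else -(q:ℚ)*((q:ℚ)+(r:ℚ)-(b:ℚ))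
  else if a ≤ q then
    if b ≤ q then -((p:ℚ)*(r:ℚ)-((a:ℚ)-1)*((r:ℚ)-(p:ℚ)))*((q:ℚ)+1-(b:ℚ))
    else -(p:ℚ)*((q:ℚ)+1-(a:ℚ))*((q:ℚ)+(r:ℚ)-(b:ℚ))
  else -((p:ℚ)*(q:ℚ)-((a:ℚ)-(q:ℚ))*((q:ℚ)-(p:ℚ)))*((q:ℚ)+(r:ℚ)-(b:ℚ))

def nent (p q r a b : ℕ) : ℚ := if a ≤ b then F p q r a b else F p q r b a

lemma nent_comm (p q r a b : ℕ) : nent p q r a b = nent p q r b a := by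
  unfold nent
  rcases Nat.lt_trichotomy a b with h | h | h
  · rw [if_pos h.le, if_neg (by omega)]
  · subst h; rfl
  · rw [if_neg (by omega), if_pos h.le]

lemma nent_00 (p q r : ℕ) : nent p q r 0 0 = -((p:ℚ)*q*r) := by
  unfold nent F; split_ifs <;> first | rfl | (exfalso; first | assumption | omega)

lemma nent_01 (p q r : ℕ) : nent p q r 0 1 = -((q:ℚ)*(r:ℚ)) := by
  unfold nent F; split_ifs <;> first | rfl | (exfalso; first | assumption | omega)

lemma nent_0w (p q r b : ℕ) (h2 : 2 ≤ b) (hbq : b ≤ q) :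
    nent p q r 0 b = -((p:ℚ)*(r:ℚ))*((q:ℚ)+1-(b:ℚ)) := by
  unfold nent F; split_ifs <;> first | rfl | (exfalso; first | assumption | omega)

lemma nent_0x (p q r b : ℕ) (hq : 1 ≤ q) (h : q+1 ≤ b) :
    nent p q r 0 b = -((p:ℚ)*(q:ℚ))*((q:ℚ)+(r:ℚ)-(b:ℚ)) := by
  unfold nent F; split_ifs <;> first | rfl | (exfalso; first | assumption | omega)

lemma nent_11 (p q r : ℕ) : nent p q r 1 1 = -((q:ℚ)+(r:ℚ)) := by
  unfold nent F; split_ifs <;> first | rfl | (exfalso; first | assumption | omega)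

lemma nent_1w (p q r b : ℕ) (h2 : 2 ≤ b) (hbq : b ≤ q) :
    nent p q r 1 b = -(r:ℚ)*((q:ℚ)+1-(b:ℚ)) := by
  unfold nent F; split_ifs <;> first | rfl | (exfalso; first | assumption | omega)

lemma nent_1x (p q r b : ℕ) (hq : 1 ≤ q) (h : q+1 ≤ b) :
    nent p q r 1 b = -(q:ℚ)*((q:ℚ)+(r:ℚ)-(b:ℚ)) := by
  unfold nent F; split_ifs <;> first | rfl | (exfalso; first | assumption | omega)

lemma nent_ww (p q r a b : ℕ) (h2 : 2 ≤ a) (hab : a ≤ b) (hbq : b ≤ q) :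
    nent p q r a b = -((p:ℚ)*(r:ℚ)-((a:ℚ)-1)*((r:ℚ)-(p:ℚ)))*((q:ℚ)+1-(b:ℚ)) := by
  unfold nent F; split_ifs <;> first | rfl | (exfalso; first | assumption | omega)

lemma nent_wx (p q r a b : ℕ) (h2 : 2 ≤ a) (haq : a ≤ q) (hb : q+1 ≤ b) :
    nent p q r a b = -(p:ℚ)*((q:ℚ)+1-(a:ℚ))*((q:ℚ)+(r:ℚ)-(b:ℚ)) := by
  unfold nent F; split_ifs <;> first | rfl | (exfalso; first | assumption | omega)

lemma nent_xx (p q r a b : ℕ) (hq : 1 ≤ q) (ha : q+1 ≤ a) (hab : a ≤ b) :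
    nent p q r a b = -((p:ℚ)*(q:ℚ)-((a:ℚ)-(q:ℚ))*((q:ℚ)-(p:ℚ)))*((q:ℚ)+(r:ℚ)-(b:ℚ)) := by
  unfold nent F; split_ifs <;> first | rfl | (exfalso; first | assumption | omega)

def iEnt (p q i j : ℕ) : ℚ :=
  if i = j then (if i = 1 then -(p:ℚ) else -2)
  else if gAdj q i j ∨ gAdj q j i then 1 else 0

def AdjP (q i j : ℕ) : Prop :=
  (i = 0 ∧ (j = 1 ∨ j = 2 ∨ j = q+1)) ∨ (2 ≤ i ∧ i ≠ q ∧ j = i+1) ∨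
  (j = 0 ∧ (i = 1 ∨ i = 2 ∨ i = q+1)) ∨ (2 ≤ j ∧ j ≠ q ∧ i = j+1)

lemma adj_iff (q i j : ℕ) : (gAdj q i j ∨ gAdj q j i) ↔ AdjP q i j := by
  simp [gAdj, AdjP]
  tauto

lemma iEnt_diag (p q i : ℕ) (h : i ≠ 1) : iEnt p q i i = -2 := by
  simp [iEnt, h]

lemma iEnt_u (p q : ℕ) : iEnt p q 1 1 = -(p:ℚ) := by simp [iEnt]

lemma iEnt_adj (p q i j : ℕ) (hne : i ≠ j) (h : AdjP q i j) : iEnt p q i j = 1 := by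
  unfold iEnt
  rw [if_neg hne, if_pos ((adj_iff q i j).mpr h)]

lemma iEnt_zero (p q i j : ℕ) (hne : i ≠ j) (h : ¬ AdjP q i j) : iEnt p q i j = 0 := by
  unfold iEnt
  rw [if_neg hne, if_neg (fun hc => h ((adj_iff q i j).mp hc))]

lemma inter_apply (p q r : ℕ) (i j : Fin (q+r)) :
    (interMatrix p q r).map ((↑) : ℤ → ℚ) i j = iEnt p q i.val j.val := by
  simp only [interMatrix, Matrix.map_apply, Matrix.of_apply, iEnt, Fin.ext_iff,
    apply_ite ((↑) : ℤ → ℚ)]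
  norm_num



lemma sum2 {f : ℕ → ℚ} {n a b : ℕ} (hab : a < b) (hbn : b < n)
    (h0 : ∀ k, k < n → k ≠ a → k ≠ b → f k = 0) :
    ∑ k ∈ Finset.range n, f k = f a + f b := by
  have hsub : ({a, b} : Finset ℕ) ⊆ Finset.range n := by
    intro x hx; simp only [Finset.mem_insert, Finset.mem_singleton] at hx
    rw [Finset.mem_range]; omega
  rw [← Finset.sum_subset hsub (fun x hx hnx => by
    simp only [Finset.mem_insert, Finset.mem_singleton, not_or] at hnx
    exact h0 x (Finset.mem_range.mp hx) hnx.1 hnx.2)]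
  rw [Finset.sum_insert (by simp; omega), Finset.sum_singleton]

lemma sum3 {f : ℕ → ℚ} {n a b c : ℕ} (hab : a < b) (hbc : b < c) (hcn : c < n)
    (h0 : ∀ k, k < n → k ≠ a → k ≠ b → k ≠ c → f k = 0) :
    ∑ k ∈ Finset.range n, f k = f a + f b + f c := by
  have hsub : ({a, b, c} : Finset ℕ) ⊆ Finset.range n := by
    intro x hx; simp only [Finset.mem_insert, Finset.mem_singleton] at hx
    rw [Finset.mem_range]; omega
  rw [← Finset.sum_subset hsub (fun x hx hnx => by
    simp only [Finset.mem_insert, Finset.mem_singleton, not_or] at hnx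
    exact h0 x (Finset.mem_range.mp hx) hnx.1 hnx.2.1 hnx.2.2)]
  rw [Finset.sum_insert (by simp; omega), Finset.sum_insert (by simp; omega),
    Finset.sum_singleton]
  ring

lemma sum4 {f : ℕ → ℚ} {n a b c d : ℕ} (hab : a < b) (hbc : b < c) (hcd : c < d) (hdn : d < n)
    (h0 : ∀ k, k < n → k ≠ a → k ≠ b → k ≠ c → k ≠ d → f k = 0) :
    ∑ k ∈ Finset.range n, f k = f a + f b + f c + f d := by
  have hsub : ({a, b, c, d} : Finset ℕ) ⊆ Finset.range n := by
    intro x hx; simp only [Finset.mem_insert, Finset.mem_singleton] at hx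
    rw [Finset.mem_range]; omega
  rw [← Finset.sum_subset hsub (fun x hx hnx => by
    simp only [Finset.mem_insert, Finset.mem_singleton, not_or] at hnx
    exact h0 x (Finset.mem_range.mp hx) hnx.1 hnx.2.1 hnx.2.2.1 hnx.2.2.2)]
  rw [Finset.sum_insert (by simp; omega), Finset.sum_insert (by simp; omega),
    Finset.sum_insert (by simp; omega), Finset.sum_singleton]
  ring



lemma key (p q r : ℕ) (hp3 : 3 ≤ p) (hpq : p < q) (hqr : q < r)
    (heqQ : (p:ℚ)*q + (p:ℚ)*r - (q:ℚ)*r = 1) (i j : ℕ) (hi : i < q+r) (hj : j < q+r) :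
    ∑ k ∈ Finset.range (q+r), iEnt p q i k * nent p q r k j
      = if i = j then 1 else 0 := by
  have hq4 : 4 ≤ q := by omega
  have hr5 : 5 ≤ r := by omega
  rcases (by omega : i = 0 ∨ i = 1 ∨ i = 2 ∨ (3 ≤ i ∧ i + 1 ≤ q) ∨ i = q ∨ i = q+1 ∨
      (q+2 ≤ i ∧ i + 1 ≤ q+r-1) ∨ i = q+r-1) with
    rfl | rfl | rfl | ⟨hi3, hiq⟩ | hiq | rfl | ⟨hix, hix2⟩ | hilast
  · -- row c = 0
    have hs : ∑ k ∈ Finset.range (q+r), iEnt p q 0 k * nent p q r k j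
        = iEnt p q 0 0 * nent p q r 0 j + iEnt p q 0 1 * nent p q r 1 j
          + iEnt p q 0 2 * nent p q r 2 j + iEnt p q 0 (q+1) * nent p q r (q+1) j :=
      sum4 (by omega) (by omega) (by omega) (by omega)
        (fun k hk h1 h2 h3 h4 => by
          rw [iEnt_zero p q 0 k (by omega) (by intro hA; unfold AdjP at hA; omega), zero_mul])
    rw [hs, iEnt_diag p q 0 (by omega),
      iEnt_adj p q 0 1 (by omega) (by by_contra hA; unfold AdjP at hA; omega),
      iEnt_adj p q 0 2 (by omega) (by by_contra hA; unfold AdjP at hA; omega),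
      iEnt_adj p q 0 (q+1) (by omega) (by by_contra hA; unfold AdjP at hA; omega)]
    rcases (by omega : j = 0 ∨ j = 1 ∨ (2 ≤ j ∧ j ≤ q) ∨ q+1 ≤ j) with
      rfl | rfl | ⟨hj2, hjq⟩ | hjx
    · rw [if_pos rfl, nent_00, nent_comm p q r 1 0, nent_01,
        nent_comm p q r 2 0, nent_0w p q r 2 (by omega) (by omega),
        nent_comm p q r (q+1) 0, nent_0x p q r (q+1) (by omega) (by omega)]
      push_cast
      linear_combination heqQ
    · rw [if_neg (by omega), nent_01, nent_11,
        nent_comm p q r 2 1, nent_1w p q r 2 (by omega) (by omega),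
        nent_comm p q r (q+1) 1, nent_1x p q r (q+1) (by omega) (by omega)]
      push_cast
      ring
    · rw [if_neg (by omega), nent_0w p q r j hj2 hjq, nent_1w p q r j hj2 hjq,
        nent_ww p q r 2 j (by omega) hj2 hjq,
        nent_comm p q r (q+1) j, nent_wx p q r j (q+1) hj2 hjq (by omega)]
      push_cast
      ring
    · rw [if_neg (by omega), nent_0x p q r j (by omega) hjx, nent_1x p q r j (by omega) hjx,
        nent_wx p q r 2 j (by omega) (by omega) hjx,
        nent_xx p q r (q+1) j (by omega) (by omega) hjx]
      push_cast
      ring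
  · -- row u = 1
    have hs : ∑ k ∈ Finset.range (q+r), iEnt p q 1 k * nent p q r k j
        = iEnt p q 1 0 * nent p q r 0 j + iEnt p q 1 1 * nent p q r 1 j :=
      sum2 (by omega) (by omega)
        (fun k hk h1 h2 => by
          rw [iEnt_zero p q 1 k (by omega) (by intro hA; unfold AdjP at hA; omega), zero_mul])
    rw [hs, iEnt_adj p q 1 0 (by omega) (by by_contra hA; unfold AdjP at hA; omega), iEnt_u]
    rcases (by omega : j = 0 ∨ j = 1 ∨ (2 ≤ j ∧ j ≤ q) ∨ q+1 ≤ j) with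
      rfl | rfl | ⟨hj2, hjq⟩ | hjx
    · rw [if_neg (by omega), nent_00, nent_comm p q r 1 0, nent_01]
      push_cast; ring
    · rw [if_pos rfl, nent_01, nent_11]
      push_cast at heqQ ⊢; linear_combination heqQ
    · rw [if_neg (by omega), nent_0w p q r j hj2 hjq, nent_1w p q r j hj2 hjq]
      push_cast; ring
    · rw [if_neg (by omega), nent_0x p q r j (by omega) hjx, nent_1x p q r j (by omega) hjx]
      push_cast; ring
  · -- row w1 = 2
    have hs : ∑ k ∈ Finset.range (q+r), iEnt p q 2 k * nent p q r k j
        = iEnt p q 2 0 * nent p q r 0 j + iEnt p q 2 2 * nent p q r 2 j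
          + iEnt p q 2 3 * nent p q r 3 j :=
      sum3 (by omega) (by omega) (by omega)
        (fun k hk h1 h2 h3 => by
          rw [iEnt_zero p q 2 k (by omega) (by intro hA; unfold AdjP at hA; omega), zero_mul])
    rw [hs, iEnt_adj p q 2 0 (by omega) (by by_contra hA; unfold AdjP at hA; omega),
      iEnt_diag p q 2 (by omega),
      iEnt_adj p q 2 3 (by omega) (by by_contra hA; unfold AdjP at hA; omega)]
    rcases (by omega : j = 0 ∨ j = 1 ∨ j = 2 ∨ (3 ≤ j ∧ j ≤ q) ∨ q+1 ≤ j) with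
      rfl | rfl | rfl | ⟨hj3, hjq⟩ | hjx
    · rw [if_neg (by omega), nent_00, nent_comm p q r 2 0,
        nent_0w p q r 2 (by omega) (by omega),
        nent_comm p q r 3 0, nent_0w p q r 3 (by omega) (by omega)]
      push_cast; ring
    · rw [if_neg (by omega), nent_01, nent_comm p q r 2 1,
        nent_1w p q r 2 (by omega) (by omega),
        nent_comm p q r 3 1, nent_1w p q r 3 (by omega) (by omega)]
      push_cast; ring
    · rw [if_pos rfl, nent_0w p q r 2 (by omega) (by omega),
        nent_ww p q r 2 2 (by omega) (by omega) (by omega),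
        nent_comm p q r 3 2, nent_ww p q r 2 3 (by omega) (by omega) (by omega)]
      push_cast at heqQ ⊢; linear_combination heqQ
    · rw [if_neg (by omega), nent_0w p q r j (by omega) hjq,
        nent_ww p q r 2 j (by omega) (by omega) hjq,
        nent_ww p q r 3 j (by omega) hj3 hjq]
      push_cast; ring
    · rw [if_neg (by omega), nent_0x p q r j (by omega) hjx,
        nent_wx p q r 2 j (by omega) (by omega) hjx,
        nent_wx p q r 3 j (by omega) (by omega) hjx]
      push_cast; ring
  · -- row w mid : i = k+3, k+4 ≤ q
    obtain ⟨k, rfl⟩ : ∃ k, i = k + 3 := ⟨i - 3, by omega⟩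
    have hs : ∑ t ∈ Finset.range (q+r), iEnt p q (k+3) t * nent p q r t j
        = iEnt p q (k+3) (k+2) * nent p q r (k+2) j
          + iEnt p q (k+3) (k+3) * nent p q r (k+3) j
          + iEnt p q (k+3) (k+4) * nent p q r (k+4) j :=
      sum3 (by omega) (by omega) (by omega)
        (fun t ht h1 h2 h3 => by
          rw [iEnt_zero p q (k+3) t (by omega) (by intro hA; unfold AdjP at hA; omega), zero_mul])
    rw [hs, iEnt_adj p q (k+3) (k+2) (by omega) (by by_contra hA; unfold AdjP at hA; omega),
      iEnt_diag p q (k+3) (by omega),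
      iEnt_adj p q (k+3) (k+4) (by omega) (by by_contra hA; unfold AdjP at hA; omega)]
    rcases (by omega : j = 0 ∨ j = 1 ∨ (2 ≤ j ∧ j ≤ k+2) ∨ j = k+3 ∨ (k+4 ≤ j ∧ j ≤ q)
        ∨ q+1 ≤ j) with rfl | rfl | ⟨hj2, hjk⟩ | rfl | ⟨hj4, hjq⟩ | hjx
    · rw [if_neg (by omega), nent_comm p q r (k+2) 0,
        nent_0w p q r (k+2) (by omega) (by omega),
        nent_comm p q r (k+3) 0, nent_0w p q r (k+3) (by omega) (by omega),
        nent_comm p q r (k+4) 0, nent_0w p q r (k+4) (by omega) (by omega)]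
      push_cast; ring
    · rw [if_neg (by omega), nent_comm p q r (k+2) 1,
        nent_1w p q r (k+2) (by omega) (by omega),
        nent_comm p q r (k+3) 1, nent_1w p q r (k+3) (by omega) (by omega),
        nent_comm p q r (k+4) 1, nent_1w p q r (k+4) (by omega) (by omega)]
      push_cast; ring
    · rw [if_neg (by omega), nent_comm p q r (k+2) j,
        nent_ww p q r j (k+2) hj2 hjk (by omega),
        nent_comm p q r (k+3) j, nent_ww p q r j (k+3) hj2 (by omega) (by omega),
        nent_comm p q r (k+4) j, nent_ww p q r j (k+4) hj2 (by omega) (by omega)]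
      push_cast; ring
    · rw [if_pos rfl, nent_ww p q r (k+2) (k+3) (by omega) (by omega) (by omega),
        nent_ww p q r (k+3) (k+3) (by omega) (by omega) (by omega),
        nent_comm p q r (k+4) (k+3), nent_ww p q r (k+3) (k+4) (by omega) (by omega) (by omega)]
      push_cast at heqQ ⊢; linear_combination heqQ
    · rw [if_neg (by omega), nent_ww p q r (k+2) j (by omega) (by omega) hjq,
        nent_ww p q r (k+3) j (by omega) (by omega) hjq,
        nent_ww p q r (k+4) j (by omega) hj4 hjq]
      push_cast; ring
    · rw [if_neg (by omega), nent_wx p q r (k+2) j (by omega) (by omega) hjx,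
        nent_wx p q r (k+3) j (by omega) (by omega) hjx,
        nent_wx p q r (k+4) j (by omega) (by omega) hjx]
      push_cast; ring
  · -- row w end : i = q
    obtain ⟨k, rfl⟩ : ∃ k, q = k + 1 := ⟨q - 1, by omega⟩
    subst hiq
    have hs : ∑ t ∈ Finset.range (k+1+r), iEnt p (k+1) (k+1) t * nent p (k+1) r t j
        = iEnt p (k+1) (k+1) k * nent p (k+1) r k j
          + iEnt p (k+1) (k+1) (k+1) * nent p (k+1) r (k+1) j :=
      sum2 (by omega) (by omega)
        (fun t ht h1 h2 => by
          rw [iEnt_zero p (k+1) (k+1) t (by omega) (by intro hA; unfold AdjP at hA; omega), zero_mul])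
    rw [hs, iEnt_adj p (k+1) (k+1) k (by omega) (by by_contra hA; unfold AdjP at hA; omega),
      iEnt_diag p (k+1) (k+1) (by omega)]
    rcases (by omega : j = 0 ∨ j = 1 ∨ (2 ≤ j ∧ j ≤ k) ∨ j = k+1 ∨ k+2 ≤ j) with
      rfl | rfl | ⟨hj2, hjk⟩ | rfl | hjx
    · rw [if_neg (by omega), nent_comm p (k+1) r k 0,
        nent_0w p (k+1) r k (by omega) (by omega),
        nent_comm p (k+1) r (k+1) 0, nent_0w p (k+1) r (k+1) (by omega) (by omega)]
      push_cast; ring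
    · rw [if_neg (by omega), nent_comm p (k+1) r k 1,
        nent_1w p (k+1) r k (by omega) (by omega),
        nent_comm p (k+1) r (k+1) 1, nent_1w p (k+1) r (k+1) (by omega) (by omega)]
      push_cast; ring
    · rw [if_neg (by omega), nent_comm p (k+1) r k j,
        nent_ww p (k+1) r j k hj2 hjk (by omega),
        nent_comm p (k+1) r (k+1) j, nent_ww p (k+1) r j (k+1) hj2 (by omega) (by omega)]
      push_cast; ring
    · rw [if_pos rfl, nent_ww p (k+1) r k (k+1) (by omega) (by omega) (by omega),
        nent_ww p (k+1) r (k+1) (k+1) (by omega) (by omega) (by omega)]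
      push_cast at heqQ ⊢; linear_combination heqQ
    · rw [if_neg (by omega), nent_wx p (k+1) r k j (by omega) (by omega) (by omega),
        nent_wx p (k+1) r (k+1) j (by omega) (by omega) (by omega)]
      push_cast; ring
  · -- row x1 = q+1
    have hs : ∑ t ∈ Finset.range (q+r), iEnt p q (q+1) t * nent p q r t j
        = iEnt p q (q+1) 0 * nent p q r 0 j + iEnt p q (q+1) (q+1) * nent p q r (q+1) j
          + iEnt p q (q+1) (q+2) * nent p q r (q+2) j :=
      sum3 (by omega) (by omega) (by omega)
        (fun t ht h1 h2 h3 => by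
          rw [iEnt_zero p q (q+1) t (by omega) (by intro hA; unfold AdjP at hA; omega), zero_mul])
    rw [hs, iEnt_adj p q (q+1) 0 (by omega) (by by_contra hA; unfold AdjP at hA; omega),
      iEnt_diag p q (q+1) (by omega),
      iEnt_adj p q (q+1) (q+2) (by omega) (by by_contra hA; unfold AdjP at hA; omega)]
    rcases (by omega : j = 0 ∨ j = 1 ∨ (2 ≤ j ∧ j ≤ q) ∨ j = q+1 ∨ q+2 ≤ j) with
      rfl | rfl | ⟨hj2, hjq⟩ | rfl | hjx
    · rw [if_neg (by omega), nent_00, nent_comm p q r (q+1) 0,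
        nent_0x p q r (q+1) (by omega) (by omega),
        nent_comm p q r (q+2) 0, nent_0x p q r (q+2) (by omega) (by omega)]
      push_cast; ring
    · rw [if_neg (by omega), nent_01, nent_comm p q r (q+1) 1,
        nent_1x p q r (q+1) (by omega) (by omega),
        nent_comm p q r (q+2) 1, nent_1x p q r (q+2) (by omega) (by omega)]
      push_cast; ring
    · rw [if_neg (by omega), nent_0w p q r j hj2 hjq,
        nent_comm p q r (q+1) j, nent_wx p q r j (q+1) hj2 hjq (by omega),
        nent_comm p q r (q+2) j, nent_wx p q r j (q+2) hj2 hjq (by omega)]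
      push_cast; ring
    · rw [if_pos rfl, nent_0x p q r (q+1) (by omega) (by omega),
        nent_xx p q r (q+1) (q+1) (by omega) (by omega) (by omega),
        nent_comm p q r (q+2) (q+1), nent_xx p q r (q+1) (q+2) (by omega) (by omega) (by omega)]
      push_cast at heqQ ⊢; linear_combination heqQ
    · rw [if_neg (by omega), nent_0x p q r j (by omega) (by omega),
        nent_xx p q r (q+1) j (by omega) (by omega) (by omega),
        nent_xx p q r (q+2) j (by omega) (by omega) (by omega)]
      push_cast; ring
  · -- row x mid : i = q+k+2
    obtain ⟨k, rfl⟩ : ∃ k, i = q + k + 2 := ⟨i - q - 2, by omega⟩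
    have hs : ∑ t ∈ Finset.range (q+r), iEnt p q (q+k+2) t * nent p q r t j
        = iEnt p q (q+k+2) (q+k+1) * nent p q r (q+k+1) j
          + iEnt p q (q+k+2) (q+k+2) * nent p q r (q+k+2) j
          + iEnt p q (q+k+2) (q+k+3) * nent p q r (q+k+3) j :=
      sum3 (by omega) (by omega) (by omega)
        (fun t ht h1 h2 h3 => by
          rw [iEnt_zero p q (q+k+2) t (by omega) (by intro hA; unfold AdjP at hA; omega), zero_mul])
    rw [hs, iEnt_adj p q (q+k+2) (q+k+1) (by omega) (by by_contra hA; unfold AdjP at hA; omega),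
      iEnt_diag p q (q+k+2) (by omega),
      iEnt_adj p q (q+k+2) (q+k+3) (by omega) (by by_contra hA; unfold AdjP at hA; omega)]
    rcases (by omega : j = 0 ∨ j = 1 ∨ (2 ≤ j ∧ j ≤ q) ∨ (q+1 ≤ j ∧ j ≤ q+k+1)
        ∨ j = q+k+2 ∨ q+k+3 ≤ j) with rfl | rfl | ⟨hj2, hjq⟩ | ⟨hjx1, hjx2⟩ | rfl | hjx
    · rw [if_neg (by omega), nent_comm p q r (q+k+1) 0,
        nent_0x p q r (q+k+1) (by omega) (by omega),
        nent_comm p q r (q+k+2) 0, nent_0x p q r (q+k+2) (by omega) (by omega),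
        nent_comm p q r (q+k+3) 0, nent_0x p q r (q+k+3) (by omega) (by omega)]
      push_cast; ring
    · rw [if_neg (by omega), nent_comm p q r (q+k+1) 1,
        nent_1x p q r (q+k+1) (by omega) (by omega),
        nent_comm p q r (q+k+2) 1, nent_1x p q r (q+k+2) (by omega) (by omega),
        nent_comm p q r (q+k+3) 1, nent_1x p q r (q+k+3) (by omega) (by omega)]
      push_cast; ring
    · rw [if_neg (by omega), nent_comm p q r (q+k+1) j,
        nent_wx p q r j (q+k+1) hj2 hjq (by omega),
        nent_comm p q r (q+k+2) j, nent_wx p q r j (q+k+2) hj2 hjq (by omega),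
        nent_comm p q r (q+k+3) j, nent_wx p q r j (q+k+3) hj2 hjq (by omega)]
      push_cast; ring
    · rw [if_neg (by omega), nent_comm p q r (q+k+1) j,
        nent_xx p q r j (q+k+1) (by omega) hjx1 hjx2,
        nent_comm p q r (q+k+2) j, nent_xx p q r j (q+k+2) (by omega) hjx1 (by omega),
        nent_comm p q r (q+k+3) j, nent_xx p q r j (q+k+3) (by omega) hjx1 (by omega)]
      push_cast; ring
    · rw [if_pos rfl, nent_xx p q r (q+k+1) (q+k+2) (by omega) (by omega) (by omega),
        nent_xx p q r (q+k+2) (q+k+2) (by omega) (by omega) (by omega),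
        nent_comm p q r (q+k+3) (q+k+2),
        nent_xx p q r (q+k+2) (q+k+3) (by omega) (by omega) (by omega)]
      push_cast at heqQ ⊢; linear_combination heqQ
    · rw [if_neg (by omega), nent_xx p q r (q+k+1) j (by omega) (by omega) (by omega),
        nent_xx p q r (q+k+2) j (by omega) (by omega) (by omega),
        nent_xx p q r (q+k+3) j (by omega) (by omega) (by omega)]
      push_cast; ring
  · -- row x end : i = q+r-1
    obtain ⟨k, rfl⟩ : ∃ k, r = k + 2 := ⟨r - 2, by omega⟩
    have hik : i = q + k + 1 := by omega
    subst hik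
    have hs : ∑ t ∈ Finset.range (q+(k+2)), iEnt p q (q+k+1) t * nent p q (k+2) t j
        = iEnt p q (q+k+1) (q+k) * nent p q (k+2) (q+k) j
          + iEnt p q (q+k+1) (q+k+1) * nent p q (k+2) (q+k+1) j :=
      sum2 (by omega) (by omega)
        (fun t ht h1 h2 => by
          rw [iEnt_zero p q (q+k+1) t (by omega) (by intro hA; unfold AdjP at hA; omega), zero_mul])
    rw [hs, iEnt_adj p q (q+k+1) (q+k) (by omega) (by by_contra hA; unfold AdjP at hA; omega),
      iEnt_diag p q (q+k+1) (by omega)]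
    rcases (by omega : j = 0 ∨ j = 1 ∨ (2 ≤ j ∧ j ≤ q) ∨ (q+1 ≤ j ∧ j ≤ q+k) ∨ j = q+k+1)
      with rfl | rfl | ⟨hj2, hjq⟩ | ⟨hjx1, hjx2⟩ | rfl
    · rw [if_neg (by omega), nent_comm p q (k+2) (q+k) 0,
        nent_0x p q (k+2) (q+k) (by omega) (by omega),
        nent_comm p q (k+2) (q+k+1) 0, nent_0x p q (k+2) (q+k+1) (by omega) (by omega)]
      push_cast; ring
    · rw [if_neg (by omega), nent_comm p q (k+2) (q+k) 1,
        nent_1x p q (k+2) (q+k) (by omega) (by omega),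
        nent_comm p q (k+2) (q+k+1) 1, nent_1x p q (k+2) (q+k+1) (by omega) (by omega)]
      push_cast; ring
    · rw [if_neg (by omega), nent_comm p q (k+2) (q+k) j,
        nent_wx p q (k+2) j (q+k) hj2 hjq (by omega),
        nent_comm p q (k+2) (q+k+1) j, nent_wx p q (k+2) j (q+k+1) hj2 hjq (by omega)]
      push_cast; ring
    · rw [if_neg (by omega), nent_comm p q (k+2) (q+k) j,
        nent_xx p q (k+2) j (q+k) (by omega) hjx1 hjx2,
        nent_comm p q (k+2) (q+k+1) j, nent_xx p q (k+2) j (q+k+1) (by omega) hjx1 (by omega)]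
      push_cast; ring
    · rw [if_pos rfl, nent_xx p q (k+2) (q+k) (q+k+1) (by omega) (by omega) (by omega),
        nent_xx p q (k+2) (q+k+1) (q+k+1) (by omega) (by omega) (by omega)]
      push_cast at heqQ ⊢
      linear_combination heqQ
  done



def Nmat (p q r : ℕ) : Matrix (Fin (q+r)) (Fin (q+r)) ℚ :=
  Matrix.of fun i j => nent p q r i.val j.val

lemma mul_eq_one (p q r : ℕ) (hp3 : 3 ≤ p) (hpq : p < q) (hqr : q < r)
    (heqQ : (p:ℚ)*q + (p:ℚ)*r - (q:ℚ)*r = 1) :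
    (interMatrix p q r).map ((↑) : ℤ → ℚ) * Nmat p q r = 1 := by
  ext i j
  rw [Matrix.mul_apply]
  simp only [inter_apply, Nmat, Matrix.of_apply]
  rw [Fin.sum_univ_eq_sum_range (fun t => iEnt p q i.val t * nent p q r t j.val) (q+r)]
  rw [key p q r hp3 hpq hqr heqQ i.val j.val i.isLt j.isLt]
  rw [Matrix.one_apply]
  by_cases h : i = j
  · rw [if_pos h, if_pos (by rw [h])]
  · rw [if_neg h, if_neg (fun hv => h (Fin.ext hv))]

end Stmt6

/-- Let `p, q, r` be pairwise relatively prime positive integers with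
`p < q < r`, `p` odd, satisfying `pq + pr − qr = 1`, and let `I` be the intersection matrix
of `G(p,q,r)` regarded over `ℚ`. Then `(I⁻¹)_{u,u} = −(q+r)`, and for every `1 ≤ m ≤ (p−1)/2`,
writing `v = x_{r−m}` (index `q+r−m`), we have `(I⁻¹)_{u,v} = −qm` and
`(I⁻¹)_{v,v} = −(q−p)m² − m`. -/
theorem stmt_6 (p q r : ℕ) (hp : 0 < p) (hpq : p < q) (hqr : q < r) (hodd : Odd p)
    (hcopq : Nat.Coprime p q) (hcopr : Nat.Coprime p r) (hcoqr : Nat.Coprime q r)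
    (heq : (p : ℤ) * q + (p : ℤ) * r - (q : ℤ) * r = 1) :
    ((interMatrix p q r).map ((↑) : ℤ → ℚ))⁻¹ ⟨1, by omega⟩ ⟨1, by omega⟩ = -((q : ℚ) + r) ∧
    ∀ (m : ℕ) (hm1 : 1 ≤ m) (hm2 : m ≤ (p - 1) / 2),
      ((interMatrix p q r).map ((↑) : ℤ → ℚ))⁻¹ ⟨1, by omega⟩ ⟨q + r - m, by omega⟩ =
        -((q : ℚ) * m) ∧
      ((interMatrix p q r).map ((↑) : ℤ → ℚ))⁻¹ ⟨q + r - m, by omega⟩ ⟨q + r - m, by omega⟩ =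
        -((q : ℚ) - p) * m ^ 2 - m := by
  have hp3 : 3 ≤ p := by
    rcases Nat.lt_or_ge p 3 with h | h
    · exfalso
      have hp1 : p = 1 := by
        rcases hodd with ⟨t, ht⟩; omega
      subst hp1
      have h2 : ((q:ℤ) - 1) * ((r:ℤ) - 1) = 0 := by push_cast at heq ⊢; linear_combination -heq
      rcases mul_eq_zero.mp h2 with h3 | h3 <;> omega
    · exact h
  have heqQ : (p:ℚ)*q + (p:ℚ)*r - (q:ℚ)*r = 1 := by exact_mod_cast heq
  have hinv : ((interMatrix p q r).map ((↑) : ℤ → ℚ))⁻¹ = Stmt6.Nmat p q r :=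
    Matrix.inv_eq_right_inv (Stmt6.mul_eq_one p q r hp3 hpq hqr heqQ)
  rw [hinv]
  constructor
  · exact Stmt6.nent_11 p q r
  · intro m hm1 hm2
    have hmr : m < r := by omega
    have hcast : ((q + r - m : ℕ) : ℚ) = (q:ℚ) + r - m := by
      rw [Nat.cast_sub (by omega)]; push_cast; ring
    constructor
    · show Stmt6.nent p q r 1 (q + r - m) = _
      rw [Stmt6.nent_1x p q r (q+r-m) (by omega) (by omega), hcast]
      ring
    · show Stmt6.nent p q r (q + r - m) (q + r - m) = _
      rw [Stmt6.nent_xx p q r (q+r-m) (q+r-m) (by omega) (by omega) (by omega), hcast]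
      linear_combination (-(m:ℚ)) * heqQ
end

section
/- Let p, q, r be pairwise relatively prime positive integers with p < q < r, p odd, satisfying pq + pr − qr = 1, and let I be the intersection matrix of G(p,q,r), regarded over ℚ. For integers a and m with 1 ≤ m ≤ (p−1)/2, let k ∈ ℚ^{q+r} be the vector whose coordinate at the vertex u is a, whose coordinate at the vertex x_{r−m} (the m-th vertex of the x-path counted from its free end) is −2, and whose other coordinates are 0. Then kᵀ I⁻¹ k = −(q+r)a² + 4aqm − 4(q−p)m² − 4m. -/
namespace Stmt7Aux

def Eh (p q : ℕ) (i j : ℕ) : ℚ :=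
  if i = j then (if i = 1 then -(p:ℚ) else -2)
  else if gAdj q i j ∨ gAdj q j i then 1 else 0

lemma gAdj_iff (q i j : ℕ) : gAdj q i j = true ↔
    (i = 0 ∧ (j = 1 ∨ j = 2 ∨ j = q+1)) ∨ (2 ≤ i ∧ i ≠ q ∧ j = i + 1) := by
  simp [gAdj]; tauto

lemma map_eq (p q r : ℕ) (i j : Fin (q+r)) :
    ((interMatrix p q r).map ((↑) : ℤ → ℚ)) i j = Eh p q i.val j.val := by
  simp only [Matrix.map_apply, interMatrix, Matrix.of_apply, Eh, Fin.ext_iff]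
  split_ifs <;> simp

lemma mulVec_eq (p q r : ℕ) (w : ℕ → ℚ) (i : Fin (q+r)) :
    ((interMatrix p q r).map ((↑) : ℤ → ℚ)).mulVec (fun j => w j.val) i
      = ∑ j ∈ Finset.range (q+r), Eh p q i.val j * w j := by
  rw [Matrix.mulVec, dotProduct,
    ← Fin.sum_univ_eq_sum_range (fun j => Eh p q i.val j * w j) (q+r)]
  exact Finset.sum_congr rfl fun j _ => by rw [map_eq]

lemma Eh_diag1 (p q : ℕ) : Eh p q 1 1 = -(p:ℚ) := by simp [Eh]

lemma Eh_diag (p q i : ℕ) (h : i ≠ 1) : Eh p q i i = -2 := by simp [Eh, h]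

lemma Eh_adj (p q : ℕ) {i j : ℕ}
    (h : (i = 0 ∧ (j = 1 ∨ j = 2 ∨ j = q+1)) ∨ (2 ≤ i ∧ i ≠ q ∧ j = i + 1)
       ∨ (j = 0 ∧ (i = 1 ∨ i = 2 ∨ i = q+1)) ∨ (2 ≤ j ∧ j ≠ q ∧ i = j + 1)) :
    Eh p q i j = 1 := by
  rw [Eh, if_neg (by omega), if_pos]
  rw [gAdj_iff, gAdj_iff]; tauto

lemma Eh_zero (p q : ℕ) {i j : ℕ}
    (h : i ≠ j ∧ ¬((i = 0 ∧ (j = 1 ∨ j = 2 ∨ j = q+1)) ∨ (2 ≤ i ∧ i ≠ q ∧ j = i + 1)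
       ∨ (j = 0 ∧ (i = 1 ∨ i = 2 ∨ i = q+1)) ∨ (2 ≤ j ∧ j ≠ q ∧ i = j + 1))) :
    Eh p q i j = 0 := by
  rw [Eh, if_neg h.1, if_neg]
  rw [gAdj_iff, gAdj_iff]; tauto



section Rows
variable (p q r : ℕ) (w : ℕ → ℚ)

lemma row0 (hq : 4 ≤ q) (hr : 5 ≤ r) :
    ∑ j ∈ Finset.range (q+r), Eh p q 0 j * w j = -2 * w 0 + w 1 + w 2 + w (q+1) := by
  rw [← Finset.sum_subset
      (show ({0,1,2,q+1} : Finset ℕ) ⊆ Finset.range (q+r) by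
        intro x hx; simp only [Finset.mem_insert, Finset.mem_singleton] at hx; simp only [Finset.mem_range]; omega)
      (fun j hj hnot => ?_)]
  · rw [Finset.sum_insert (by simp only [Finset.mem_insert, Finset.mem_singleton]; omega), Finset.sum_insert (by simp only [Finset.mem_insert, Finset.mem_singleton]; omega),
      Finset.sum_insert (by simp only [Finset.mem_insert, Finset.mem_singleton]; omega), Finset.sum_singleton]
    rw [Eh_diag p q 0 (by omega), Eh_adj p q (by omega), Eh_adj p q (by omega),
      Eh_adj p q (by omega)]
    ring
  · simp only [Finset.mem_insert, Finset.mem_singleton, not_or] at hnot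
    have hjr := Finset.mem_range.mp hj
    rw [Eh_zero p q ⟨by omega, by rintro (⟨h1,h2|h2|h2⟩|⟨h1,h2,h3⟩|⟨h1,h2|h2|h2⟩|⟨h1,h2,h3⟩) <;> omega⟩,
      zero_mul]

lemma row1 (hq : 4 ≤ q) (hr : 5 ≤ r) :
    ∑ j ∈ Finset.range (q+r), Eh p q 1 j * w j = w 0 - p * w 1 := by
  rw [← Finset.sum_subset
      (show ({0,1} : Finset ℕ) ⊆ Finset.range (q+r) by intro x hx; simp only [Finset.mem_insert, Finset.mem_singleton] at hx; simp only [Finset.mem_range]; omega)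
      (fun j hj hnot => ?_)]
  · rw [Finset.sum_insert (by simp only [Finset.mem_insert, Finset.mem_singleton]; omega), Finset.sum_singleton,
      Eh_adj p q (by omega), Eh_diag1]
    ring
  · simp only [Finset.mem_insert, Finset.mem_singleton, not_or] at hnot
    have hjr := Finset.mem_range.mp hj
    rw [Eh_zero p q ⟨by omega, by rintro (⟨h1,h2|h2|h2⟩|⟨h1,h2,h3⟩|⟨h1,h2|h2|h2⟩|⟨h1,h2,h3⟩) <;> omega⟩,
      zero_mul]

lemma row2 (hq : 4 ≤ q) (hr : 5 ≤ r) :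
    ∑ j ∈ Finset.range (q+r), Eh p q 2 j * w j = w 0 - 2 * w 2 + w 3 := by
  rw [← Finset.sum_subset
      (show ({0,2,3} : Finset ℕ) ⊆ Finset.range (q+r) by intro x hx; simp only [Finset.mem_insert, Finset.mem_singleton] at hx; simp only [Finset.mem_range]; omega)
      (fun j hj hnot => ?_)]
  · rw [Finset.sum_insert (by simp only [Finset.mem_insert, Finset.mem_singleton]; omega), Finset.sum_insert (by simp only [Finset.mem_insert, Finset.mem_singleton]; omega), Finset.sum_singleton,
      Eh_adj p q (by omega), Eh_diag p q 2 (by omega), Eh_adj p q (by omega)]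
    ring
  · simp only [Finset.mem_insert, Finset.mem_singleton, not_or] at hnot
    have hjr := Finset.mem_range.mp hj
    rw [Eh_zero p q ⟨by omega, by rintro (⟨h1,h2|h2|h2⟩|⟨h1,h2,h3⟩|⟨h1,h2|h2|h2⟩|⟨h1,h2,h3⟩) <;> omega⟩,
      zero_mul]

lemma rowW (s : ℕ) (hr : 5 ≤ r) (hs : s + 4 ≤ q) :
    ∑ j ∈ Finset.range (q+r), Eh p q (s+3) j * w j = w (s+2) - 2 * w (s+3) + w (s+4) := by
  rw [← Finset.sum_subset
      (show ({s+2,s+3,s+4} : Finset ℕ) ⊆ Finset.range (q+r) by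
        intro x hx; simp only [Finset.mem_insert, Finset.mem_singleton] at hx; simp only [Finset.mem_range]; omega)
      (fun j hj hnot => ?_)]
  · rw [Finset.sum_insert (by simp only [Finset.mem_insert, Finset.mem_singleton]; omega), Finset.sum_insert (by simp only [Finset.mem_insert, Finset.mem_singleton]; omega), Finset.sum_singleton,
      Eh_adj p q (by omega), Eh_diag p q (s+3) (by omega), Eh_adj p q (by omega)]
    ring
  · simp only [Finset.mem_insert, Finset.mem_singleton, not_or] at hnot
    have hjr := Finset.mem_range.mp hj
    rw [Eh_zero p q ⟨by omega, by rintro (⟨h1,h2|h2|h2⟩|⟨h1,h2,h3⟩|⟨h1,h2|h2|h2⟩|⟨h1,h2,h3⟩) <;> omega⟩,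
      zero_mul]

lemma rowQ (hq : 4 ≤ q) (hr : 5 ≤ r) :
    ∑ j ∈ Finset.range (q+r), Eh p q q j * w j = w (q-1) - 2 * w q := by
  obtain ⟨u, hu⟩ : ∃ u, q = u + 1 := ⟨q-1, by omega⟩
  have h1 : q - 1 = u := by omega
  rw [h1]
  rw [← Finset.sum_subset
      (show ({u,q} : Finset ℕ) ⊆ Finset.range (q+r) by intro x hx; simp only [Finset.mem_insert, Finset.mem_singleton] at hx; simp only [Finset.mem_range]; omega)
      (fun j hj hnot => ?_)]
  · rw [Finset.sum_insert (by simp only [Finset.mem_insert, Finset.mem_singleton]; omega), Finset.sum_singleton,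
      Eh_adj p q (by omega), Eh_diag p q q (by omega)]
    ring
  · simp only [Finset.mem_insert, Finset.mem_singleton, not_or] at hnot
    have hjr := Finset.mem_range.mp hj
    rw [Eh_zero p q ⟨by omega, by rintro (⟨h1,h2|h2|h2⟩|⟨h1,h2,h3⟩|⟨h1,h2|h2|h2⟩|⟨h1,h2,h3⟩) <;> omega⟩,
      zero_mul]

lemma rowQ1 (hq : 4 ≤ q) (hr : 5 ≤ r) :
    ∑ j ∈ Finset.range (q+r), Eh p q (q+1) j * w j = w 0 - 2 * w (q+1) + w (q+2) := by
  rw [← Finset.sum_subset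
      (show ({0,q+1,q+2} : Finset ℕ) ⊆ Finset.range (q+r) by intro x hx; simp only [Finset.mem_insert, Finset.mem_singleton] at hx; simp only [Finset.mem_range]; omega)
      (fun j hj hnot => ?_)]
  · rw [Finset.sum_insert (by simp only [Finset.mem_insert, Finset.mem_singleton]; omega), Finset.sum_insert (by simp only [Finset.mem_insert, Finset.mem_singleton]; omega), Finset.sum_singleton,
      Eh_adj p q (by omega), Eh_diag p q (q+1) (by omega), Eh_adj p q (by omega)]
    ring
  · simp only [Finset.mem_insert, Finset.mem_singleton, not_or] at hnot
    have hjr := Finset.mem_range.mp hj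
    rw [Eh_zero p q ⟨by omega, by rintro (⟨h1,h2|h2|h2⟩|⟨h1,h2,h3⟩|⟨h1,h2|h2|h2⟩|⟨h1,h2,h3⟩) <;> omega⟩,
      zero_mul]

lemma rowX (s : ℕ) (hq : 4 ≤ q) (hs : q + 4 + s ≤ q + r) :
    ∑ j ∈ Finset.range (q+r), Eh p q (q+2+s) j * w j
      = w (q+1+s) - 2 * w (q+2+s) + w (q+3+s) := by
  rw [← Finset.sum_subset
      (show ({q+1+s,q+2+s,q+3+s} : Finset ℕ) ⊆ Finset.range (q+r) by
        intro x hx; simp only [Finset.mem_insert, Finset.mem_singleton] at hx; simp only [Finset.mem_range]; omega)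
      (fun j hj hnot => ?_)]
  · rw [Finset.sum_insert (by simp only [Finset.mem_insert, Finset.mem_singleton]; omega), Finset.sum_insert (by simp only [Finset.mem_insert, Finset.mem_singleton]; omega), Finset.sum_singleton,
      Eh_adj p q (by omega), Eh_diag p q (q+2+s) (by omega), Eh_adj p q (by omega)]
    ring
  · simp only [Finset.mem_insert, Finset.mem_singleton, not_or] at hnot
    have hjr := Finset.mem_range.mp hj
    rw [Eh_zero p q ⟨by omega, by rintro (⟨h1,h2|h2|h2⟩|⟨h1,h2,h3⟩|⟨h1,h2|h2|h2⟩|⟨h1,h2,h3⟩) <;> omega⟩,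
      zero_mul]

lemma rowEnd (hq : 4 ≤ q) (hr : 5 ≤ r) :
    ∑ j ∈ Finset.range (q+r), Eh p q (q+r-1) j * w j = w (q+r-2) - 2 * w (q+r-1) := by
  obtain ⟨u, hu⟩ : ∃ u, q + r = u + 2 := ⟨q+r-2, by omega⟩
  have h1 : q + r - 2 = u := by omega
  have h2 : q + r - 1 = u + 1 := by omega
  rw [h1, h2]
  rw [← Finset.sum_subset
      (show ({u,u+1} : Finset ℕ) ⊆ Finset.range (q+r) by intro x hx; simp only [Finset.mem_insert, Finset.mem_singleton] at hx; simp only [Finset.mem_range]; omega)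
      (fun j hj hnot => ?_)]
  · rw [Finset.sum_insert (by simp only [Finset.mem_insert, Finset.mem_singleton]; omega), Finset.sum_singleton,
      Eh_adj p q (by omega), Eh_diag p q (u+1) (by omega)]
    ring
  · simp only [Finset.mem_insert, Finset.mem_singleton, not_or] at hnot
    have hjr := Finset.mem_range.mp hj
    rw [Eh_zero p q ⟨by omega, by rintro (⟨h1,h2|h2|h2⟩|⟨h1,h2,h3⟩|⟨h1,h2|h2|h2⟩|⟨h1,h2,h3⟩) <;> omega⟩,
      zero_mul]

end Rows

/-- The explicit solution vector `v` with `I v = k`. -/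
noncomputable def vh (p q r m : ℕ) (a : ℚ) : ℕ → ℚ := fun i =>
  if i = 0 then -a*q*r + 2*m*p*q
  else if i = 1 then -a*(q+r) + 2*m*q
  else if i ≤ q then ((q:ℚ)+1-(i:ℚ)) * (-a*r + 2*p*m)
  else if i ≤ q+r-m then -a*((q:ℚ)+(r:ℚ)-(i:ℚ))*q + 2*m*((p:ℚ)*q-((q:ℚ)-p)*((i:ℚ)-q))
  else ((q:ℚ)+(r:ℚ)-(i:ℚ))*(-a*q + 2*(1+((q:ℚ)-p)*m))

section Vh
variable (p q r m : ℕ) (a : ℚ)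

lemma vh0 : vh p q r m a 0 = -a*q*r + 2*m*p*q := by simp [vh]

lemma vh1 : vh p q r m a 1 = -a*(q+r) + 2*m*q := by simp [vh]

lemma vhW {i : ℕ} (h2 : 2 ≤ i) (hiq : i ≤ q) :
    vh p q r m a i = ((q:ℚ)+1-(i:ℚ)) * (-a*r + 2*p*m) := by
  rw [vh, if_neg (by omega), if_neg (by omega), if_pos hiq]

lemma vhM {i : ℕ} (hq : 1 ≤ q) (h1 : q+1 ≤ i) (h2 : i ≤ q+r-m) :
    vh p q r m a i = -a*((q:ℚ)+(r:ℚ)-(i:ℚ))*q + 2*m*((p:ℚ)*q-((q:ℚ)-p)*((i:ℚ)-q)) := by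
  rw [vh, if_neg (by omega), if_neg (by omega), if_neg (by omega), if_pos h2]

lemma vhX {i : ℕ} (hq : 1 ≤ q) (hQ : (p:ℚ)*q + (p:ℚ)*r - (q:ℚ)*r = 1)
    (hm1 : 1 ≤ m) (hmr : m + 2 ≤ r)
    (h1 : q+r-m ≤ i) (h2 : i+1 ≤ q+r) :
    vh p q r m a i = ((q:ℚ)+(r:ℚ)-(i:ℚ))*(-a*q + 2*(1+((q:ℚ)-p)*m)) := by
  rcases Nat.lt_or_ge (q+r-m) i with h | h
  · rw [vh, if_neg (by omega), if_neg (by omega), if_neg (by omega), if_neg (by omega)]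
  · have hi : i = q+r-m := by omega
    rw [vhM p q r m a (i := i) (by omega) (by omega) (by omega)]
    have hic : (i:ℚ) = (q:ℚ)+(r:ℚ)-(m:ℚ) := by
      rw [hi, Nat.cast_sub (by omega)]; push_cast; ring
    rw [hic]
    linear_combination (2*(m:ℚ))*hQ

end Vh

def kh (q r m : ℕ) (a : ℚ) : ℕ → ℚ := fun i =>
  if i = 1 then a else if i = q + r - m then -2 else 0

lemma mulVec_vh (p q r m : ℕ) (a : ℚ) (hq : 4 ≤ q) (hr : 5 ≤ r)
    (hm1 : 1 ≤ m) (hmr : m + 2 ≤ r) (hmq : m + 2 ≤ q)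
    (hQ : (p:ℚ)*q + (p:ℚ)*r - (q:ℚ)*r = 1) (i : Fin (q+r)) :
    ∑ j ∈ Finset.range (q+r), Eh p q i.val j * vh p q r m a j = kh q r m a i.val := by
  have hiv : i.val < q + r := i.isLt
  have hcase : i.val = 0 ∨ i.val = 1 ∨ i.val = 2 ∨ (∃ s, i.val = s+3 ∧ s+4 ≤ q)
      ∨ i.val = q ∨ i.val = q+1 ∨ (∃ s, i.val = q+2+s ∧ q+4+s ≤ q+r)
      ∨ i.val = q+r-1 := by
    rcases Nat.lt_or_ge i.val 3 with h | h
    · omega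
    · rcases Nat.lt_or_ge i.val q with h2 | h2
      · exact .inr (.inr (.inr (.inl ⟨i.val - 3, by omega⟩)))
      · rcases Nat.lt_or_ge i.val (q+2) with h3 | h3
        · omega
        · rcases Nat.lt_or_ge i.val (q+r-1) with h4 | h4
          · exact .inr (.inr (.inr (.inr (.inr (.inr (.inl ⟨i.val - (q+2), by omega⟩))))))
          · omega
  rcases hcase with h | h | h | ⟨s, h, hs⟩ | h | h | ⟨s, h, hs⟩ | h <;> rw [h]
  · -- i = 0
    rw [row0 p q r _ hq hr, vh0, vh1, vhW p q r m a (by omega) (by omega),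
      vhM p q r m a (by omega) (by omega) (by omega), kh,
      if_neg (by omega), if_neg (by omega)]
    push_cast
    ring
  · -- i = 1
    rw [row1 p q r _ hq hr, vh0, vh1, kh, if_pos rfl]
    linear_combination a * hQ
  · -- i = 2
    rw [row2 p q r _ hq hr, vh0, vhW p q r m a (i := 2) (by omega) (by omega),
      vhW p q r m a (i := 3) (by omega) (by omega), kh,
      if_neg (by omega), if_neg (by omega)]
    push_cast
    ring
  · -- w-interior
    rw [rowW p q r _ s hr (by omega), vhW p q r m a (i := s+2) (by omega) (by omega),
      vhW p q r m a (i := s+3) (by omega) (by omega),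
      vhW p q r m a (i := s+4) (by omega) (by omega), kh,
      if_neg (by omega), if_neg (by omega)]
    push_cast
    ring
  · -- i = q
    rw [rowQ p q r _ hq hr, vhW p q r m a (i := q-1) (by omega) (by omega),
      vhW p q r m a (i := q) (by omega) (by omega), kh,
      if_neg (by omega), if_neg (by omega), Nat.cast_sub (by omega : 1 ≤ q)]
    push_cast
    ring
  · -- i = q+1
    rw [rowQ1 p q r _ hq hr, vh0, vhM p q r m a (i := q+1) (by omega) (by omega) (by omega),
      vhM p q r m a (i := q+2) (by omega) (by omega) (by omega), kh,
      if_neg (by omega), if_neg (by omega)]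
    push_cast
    ring
  · -- x-interior
    rw [rowX p q r _ s hq (by omega)]
    rcases (by omega : q+3+s ≤ q+r-m ∨ q+2+s = q+r-m ∨ q+r-m+1 ≤ q+2+s) with hc | hc | hc
    · rw [vhM p q r m a (i := q+1+s) (by omega) (by omega) (by omega),
        vhM p q r m a (i := q+2+s) (by omega) (by omega) (by omega),
        vhM p q r m a (i := q+3+s) (by omega) (by omega) (by omega), kh,
        if_neg (by omega), if_neg (by omega)]
      push_cast
      ring
    · rw [vhM p q r m a (i := q+1+s) (by omega) (by omega) (by omega),
        vhM p q r m a (i := q+2+s) (by omega) (by omega) (by omega),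
        vhX p q r m a (i := q+3+s) (by omega) hQ hm1 hmr (by omega) (by omega), kh,
        if_neg (by omega), if_pos hc]
      have hsc : (s:ℚ) = (r:ℚ) - m - 2 := by
        have := congrArg (Nat.cast : ℕ → ℚ) hc
        rw [Nat.cast_sub (by omega : m ≤ q+r)] at this
        push_cast at this
        linarith
      push_cast
      rw [hsc]
      linear_combination (-2*(m:ℚ)) * hQ
    · rw [vhX p q r m a (i := q+1+s) (by omega) hQ hm1 hmr (by omega) (by omega),
        vhX p q r m a (i := q+2+s) (by omega) hQ hm1 hmr (by omega) (by omega),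
        vhX p q r m a (i := q+3+s) (by omega) hQ hm1 hmr (by omega) (by omega), kh,
        if_neg (by omega), if_neg (by omega)]
      push_cast
      ring
  · -- i = q+r-1
    rw [rowEnd p q r _ hq hr]
    rcases (by omega : m = 1 ∨ 2 ≤ m) with hm | hm
    · rw [vhM p q r m a (i := q+r-2) (by omega) (by omega) (by omega),
        vhM p q r m a (i := q+r-1) (by omega) (by omega) (by omega), kh,
        if_neg (by omega), if_pos (by omega),
        Nat.cast_sub (by omega : 2 ≤ q+r), Nat.cast_sub (by omega : 1 ≤ q+r)]
      rw [hm]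
      push_cast
      linear_combination (-2:ℚ) * hQ
    · rw [vhX p q r m a (i := q+r-2) (by omega) hQ hm1 hmr (by omega) (by omega),
        vhX p q r m a (i := q+r-1) (by omega) hQ hm1 hmr (by omega) (by omega), kh,
        if_neg (by omega), if_neg (by omega),
        Nat.cast_sub (by omega : 2 ≤ q+r), Nat.cast_sub (by omega : 1 ≤ q+r)]
      push_cast
      ring

lemma det_ne (p q r : ℕ) (hq : 4 ≤ q) (hr : 5 ≤ r) (hp : 1 ≤ p)
    (hQ : (p:ℚ)*q + (p:ℚ)*r - (q:ℚ)*r = 1) :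
    ((interMatrix p q r).map ((↑) : ℤ → ℚ)).det ≠ 0 := by
  intro hdet
  obtain ⟨v, hvne, hv0⟩ := Matrix.exists_mulVec_eq_zero_iff.mpr hdet
  set w : ℕ → ℚ := fun j => if h : j < q+r then v ⟨j, h⟩ else 0 with hw
  have hvw : v = fun j : Fin (q+r) => w j.val := by
    funext j; simp [hw, j.isLt]
  have hrowN : ∀ i, i < q+r → ∑ j ∈ Finset.range (q+r), Eh p q i j * w j = 0 := by
    intro i hi
    have h := congrFun hv0 ⟨i, hi⟩
    rw [hvw] at h
    rw [← mulVec_eq p q r w ⟨i, hi⟩]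
    simpa using h
  have claimW : ∀ s, s ≤ q - 2 → w (q - s) = ((s:ℚ)+1) * w q := by
    intro s
    induction s using Nat.strong_induction_on with
    | _ s IH =>
      intro hs
      rcases s with _ | s
      · norm_num
      rcases s with _ | s
      · have h := hrowN q (by omega)
        rw [rowQ p q r w hq hr] at h
        push_cast
        linarith
      · have h := hrowN (q - (s+2) + 1) (by omega)
        obtain ⟨u, hu⟩ : ∃ u, q - (s+2) = u + 2 := ⟨q - (s+2) - 2, by omega⟩
        rw [show q - (s+2) + 1 = u + 3 from by omega] at h
        rw [rowW p q r w u hr (by omega)] at h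
        rw [show u+3 = q - (s+1) from by omega, show u+4 = q - s from by omega,
          show u+2 = q - (s+2) from by omega] at h
        have h1 := IH (s+1) (by omega) (by omega)
        have h2 := IH s (by omega) (by omega)
        rw [h1, h2] at h
        push_cast at h ⊢
        linarith
  have claimX : ∀ s, 1 ≤ s → s ≤ r - 1 → w (q+r-s) = (s:ℚ) * w (q+r-1) := by
    intro s
    induction s using Nat.strong_induction_on with
    | _ s IH =>
      intro hs1 hs2
      rcases s with _ | s
      · omega
      rcases s with _ | s
      · norm_num
      rcases s with _ | s
      · have h := hrowN (q+r-1) (by omega)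
        rw [rowEnd p q r w hq hr] at h
        push_cast
        linarith
      · have h := hrowN (q+r-(s+2)) (by omega)
        obtain ⟨u, hu⟩ : ∃ u, q+r-(s+3) = q+1+u := ⟨r-s-4, by omega⟩
        rw [show q+r-(s+2) = q+2+u from by omega] at h
        rw [rowX p q r w u hq (by omega)] at h
        rw [show q+1+u = q+r-(s+3) from by omega, show q+2+u = q+r-(s+2) from by omega,
          show q+3+u = q+r-(s+1) from by omega] at h
        have h1 := IH (s+2) (by omega) (by omega) (by omega)
        have h2 := IH (s+1) (by omega) (by omega) (by omega)
        rw [h1, h2] at h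
        push_cast at h ⊢
        linarith
  -- collect the key equations
  have h0 := hrowN 0 (by omega); rw [row0 p q r w hq hr] at h0
  have h1 := hrowN 1 (by omega); rw [row1 p q r w hq hr] at h1
  have h2 := hrowN 2 (by omega); rw [row2 p q r w hq hr] at h2
  have hq1 := hrowN (q+1) (by omega); rw [rowQ1 p q r w hq hr] at hq1
  have hw2 : w 2 = ((q:ℚ)-1) * w q := by
    have h := claimW (q-2) (le_refl _)
    rw [show q-(q-2) = 2 from by omega] at h
    rw [h, Nat.cast_sub (by omega : 2 ≤ q)]
    push_cast; ring
  have hw3 : w 3 = ((q:ℚ)-2) * w q := by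
    have h := claimW (q-3) (by omega)
    rw [show q-(q-3) = 3 from by omega] at h
    rw [h, Nat.cast_sub (by omega : 3 ≤ q)]
    push_cast; ring
  have hwq1 : w (q+1) = ((r:ℚ)-1) * w (q+r-1) := by
    have h := claimX (r-1) (by omega) (le_refl _)
    rw [show q+r-(r-1) = q+1 from by omega] at h
    rw [h, Nat.cast_sub (by omega : 1 ≤ r)]; norm_num
  have hwq2 : w (q+2) = ((r:ℚ)-2) * w (q+r-1) := by
    have h := claimX (r-2) (by omega) (by omega)
    rw [show q+r-(r-2) = q+2 from by omega] at h
    rw [h, Nat.cast_sub (by omega : 2 ≤ r)]; norm_num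
  have hX : (q:ℚ) * w q = w 0 := by linear_combination -h2 - 2*hw2 + hw3
  have hY : (r:ℚ) * w (q+r-1) = w 0 := by linear_combination -hq1 - 2*hwq1 + hwq2
  have hqQ : (q:ℚ) ≠ 0 := by positivity
  have hrQ : (r:ℚ) ≠ 0 := by positivity
  have hpQ : (p:ℚ) ≠ 0 := by positivity
  have hw0 : w 0 = 0 := by
    linear_combination (-(p:ℚ)*q*r)*h0 - ((q:ℚ)*r)*h1 + ((p:ℚ)*r*((q:ℚ)-1))*hX
      + ((p:ℚ)*q*((r:ℚ)-1))*hY + ((p:ℚ)*q*r)*hw2 + ((p:ℚ)*q*r)*hwq1 - (w 0)*hQ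
  have hwq : w q = 0 := by
    have := hX; rw [hw0] at this
    exact (mul_eq_zero.mp this).resolve_left hqQ
  have hwY : w (q+r-1) = 0 := by
    have := hY; rw [hw0] at this
    exact (mul_eq_zero.mp this).resolve_left hrQ
  have hw1 : w 1 = 0 := by
    rw [hw0] at h1
    have : (p:ℚ) * w 1 = 0 := by linarith
    exact (mul_eq_zero.mp this).resolve_left hpQ
  apply hvne
  rw [hvw]
  funext j
  show w j.val = 0
  have hj : j.val < q + r := j.isLt
  rcases (by omega : j.val = 0 ∨ j.val = 1 ∨ (2 ≤ j.val ∧ j.val ≤ q)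
      ∨ (q+1 ≤ j.val ∧ j.val ≤ q+r-1)) with h | h | ⟨ha, hb⟩ | ⟨ha, hb⟩
  · rw [h, hw0]
  · rw [h, hw1]
  · have hc := claimW (q - j.val) (by omega)
    rw [show q-(q-j.val) = j.val from by omega] at hc
    rw [hc, hwq, mul_zero]
  · have hc := claimX (q+r - j.val) (by omega) (by omega)
    rw [show q+r-(q+r-j.val) = j.val from by omega] at hc
    rw [hc, hwY, mul_zero]

end Stmt7Aux

/-- Let `p, q, r` be pairwise relatively prime positive integers with
`p < q < r`, `p` odd, satisfying `pq + pr − qr = 1`, and let `I` be the intersection matrix of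
`G(p,q,r)`, regarded over `ℚ`. For integers `a` and `m` with `1 ≤ m ≤ (p−1)/2`, let
`k ∈ ℚ^{q+r}` be the vector with coordinate `a` at the vertex `u`, coordinate `−2` at the
vertex `x_{r−m}` (index `q+r−m`), and all other coordinates `0`. Then
`kᵀ I⁻¹ k = −(q+r)a² + 4aqm − 4(q−p)m² − 4m`. -/
theorem stmt_7 (p q r : ℕ) (hp : 0 < p) (hpq : p < q) (hqr : q < r) (hodd : Odd p)
    (hcopq : Nat.Coprime p q) (hcopr : Nat.Coprime p r) (hcoqr : Nat.Coprime q r)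
    (heq : (p : ℤ) * q + (p : ℤ) * r - (q : ℤ) * r = 1)
    (a : ℤ) (m : ℕ) (hm1 : 1 ≤ m) (hm2 : m ≤ (p - 1) / 2) :
    dotProduct
        (fun i : Fin (q + r) => if (i : ℕ) = 1 then (a : ℚ)
          else if (i : ℕ) = q + r - m then -2 else 0)
        (Matrix.mulVec (((interMatrix p q r).map ((↑) : ℤ → ℚ))⁻¹)
          (fun i : Fin (q + r) => if (i : ℕ) = 1 then (a : ℚ)
            else if (i : ℕ) = q + r - m then -2 else 0)) =
      -((q : ℚ) + r) * a ^ 2 + 4 * a * q * m - 4 * ((q : ℚ) - p) * m ^ 2 - 4 * m := by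
  have hp3 : 3 ≤ p := by omega
  have hq4 : 4 ≤ q := by omega
  have hr5 : 5 ≤ r := by omega
  have hmr : m + 2 ≤ r := by omega
  have hmq : m + 2 ≤ q := by omega
  have hQ : (p:ℚ)*q + (p:ℚ)*r - (q:ℚ)*r = 1 := by exact_mod_cast heq
  set M := (interMatrix p q r).map ((↑) : ℤ → ℚ) with hM
  have hunit : IsUnit M.det :=
    isUnit_iff_ne_zero.mpr (Stmt7Aux.det_ne p q r hq4 hr5 (by omega) hQ)
  have hk : (fun i : Fin (q+r) => if (i:ℕ) = 1 then (a:ℚ) else if (i:ℕ) = q+r-m then -2 else 0)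
      = fun j : Fin (q+r) => Stmt7Aux.kh q r m (a:ℚ) j.val := rfl
  have hMv : M.mulVec (fun j : Fin (q+r) => Stmt7Aux.vh p q r m (a:ℚ) j.val)
      = fun j : Fin (q+r) => Stmt7Aux.kh q r m (a:ℚ) j.val := by
    funext i
    rw [hM, Stmt7Aux.mulVec_eq]
    exact Stmt7Aux.mulVec_vh p q r m (a:ℚ) hq4 hr5 hm1 hmr hmq hQ i
  rw [hk]
  have hinv : M⁻¹.mulVec (fun j : Fin (q+r) => Stmt7Aux.kh q r m (a:ℚ) j.val)
      = fun j : Fin (q+r) => Stmt7Aux.vh p q r m (a:ℚ) j.val := by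
    rw [← hMv, Matrix.mulVec_mulVec, Matrix.nonsing_inv_mul M hunit, Matrix.one_mulVec]
  rw [hinv]
  have hdot : dotProduct (fun j : Fin (q+r) => Stmt7Aux.kh q r m (a:ℚ) j.val)
      (fun j : Fin (q+r) => Stmt7Aux.vh p q r m (a:ℚ) j.val)
      = ∑ j ∈ Finset.range (q+r), Stmt7Aux.kh q r m (a:ℚ) j * Stmt7Aux.vh p q r m (a:ℚ) j := by
    rw [dotProduct, ← Fin.sum_univ_eq_sum_range
      (fun j => Stmt7Aux.kh q r m (a:ℚ) j * Stmt7Aux.vh p q r m (a:ℚ) j) (q+r)]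
  rw [hdot]
  rw [← Finset.sum_subset
      (show ({1, q+r-m} : Finset ℕ) ⊆ Finset.range (q+r) by
        intro x hx; simp only [Finset.mem_insert, Finset.mem_singleton] at hx
        simp only [Finset.mem_range]; omega)
      (fun j hj hnot => ?_)]
  · rw [Finset.sum_insert (by simp only [Finset.mem_singleton]; omega), Finset.sum_singleton]
    rw [show Stmt7Aux.kh q r m (a:ℚ) 1 = (a:ℚ) from by simp [Stmt7Aux.kh],
      show Stmt7Aux.kh q r m (a:ℚ) (q+r-m) = -2 from by
        simp only [Stmt7Aux.kh]; rw [if_neg (by omega)]; simp,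
      Stmt7Aux.vh1, Stmt7Aux.vhM p q r m (a:ℚ) (i := q+r-m) (by omega) (by omega) (by omega),
      Nat.cast_sub (by omega : m ≤ q+r)]
    push_cast
    linear_combination (-4*(m:ℚ)) * hQ
  · simp only [Finset.mem_insert, Finset.mem_singleton, not_or] at hnot
    rw [show Stmt7Aux.kh q r m (a:ℚ) j = 0 from by
      simp only [Stmt7Aux.kh]; rw [if_neg hnot.1, if_neg hnot.2], zero_mul]
end

section
/- Let t ≥ 2 and consider the Ozsváth–Szabó move relation on ℤᵗ for the simple linear graph A_t: a single move replaces a vector c having some coordinate cᵢ = 2 by c + 2·(i-th column of M_t), where M_t is the t×t tridiagonal matrix with −2 on the diagonal and 1 in the entries adjacent to the diagonal (so the move sets cᵢ to −2 and increases each coordinate adjacent to i by 2). If c ∈ {0,2}ᵗ has at least two coordinates equal to 2, then no vector all of whose coordinates lie in {−2, 0} is reachable from c by a finite sequence of such moves. -/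
/-- The matrix `M_t` of the simple linear graph `A_t`: `t × t`, with `−2` on the diagonal,
`1` in positions `(i, i±1)`, and `0` elsewhere. -/
def Mt (t : ℕ) : Matrix (Fin t) (Fin t) ℤ :=
  Matrix.of fun i j =>
    if i = j then -2 else if (i : ℕ) + 1 = (j : ℕ) ∨ (j : ℕ) + 1 = (i : ℕ) then 1 else 0

/-- The Ozsváth–Szabó move relation on `ℤᵗ`: `c ⇝ c'` if there is an index `i` with
`cᵢ = 2` and `c' = c + 2·(i`-th column of `M_t)`. -/
def OSMove (t : ℕ) (c c' : Fin t → ℤ) : Prop :=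
  ∃ i : Fin t, c i = 2 ∧ c' = fun j => c j + 2 * Mt t j i

/-!
Call an interval of coordinates heavy if its entries sum to more than `2`. Firing `p`
does not decrease the sum over a set avoiding `p`, and raises it by at least `2` if the set
contains a neighbour of `p`. A heavy interval containing `p` (where `c p = 2`) splits into the
parts left and right of `p`, one of which has positive sum and contains a neighbour of `p`, so
that part is heavy after the move. Hence having a heavy interval is invariant under moves; the
interval between two coordinates equal to `2` is heavy when `c ∈ {0,2}ᵗ`, while no vector in
`{−2,0}ᵗ` has a heavy interval.
-/

open Finset

variable {t : ℕ}

lemma Mt_apply_nonneg_of_ne {k p : Fin t} (h : k ≠ p) : 0 ≤ Mt t k p := by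
  simp only [Mt, Matrix.of_apply, if_neg h]
  split_ifs <;> norm_num

lemma Mt_apply_of_adj {k p : Fin t} (h : (k : ℕ) + 1 = p ∨ (p : ℕ) + 1 = k) :
    Mt t k p = 1 := by
  have hne : k ≠ p := by rintro rfl; omega
  simp only [Mt, Matrix.of_apply, if_neg hne, if_pos h]

lemma sum_fire (c : Fin t → ℤ) (p : Fin t) (S : Finset (Fin t)) :
    ∑ k ∈ S, (c k + 2 * Mt t k p) = ∑ k ∈ S, c k + 2 * ∑ k ∈ S, Mt t k p := by
  rw [sum_add_distrib, mul_sum]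

lemma sum_le_sum_fire_of_notMem (c : Fin t → ℤ) {p : Fin t} {S : Finset (Fin t)}
    (hp : p ∉ S) : ∑ k ∈ S, c k ≤ ∑ k ∈ S, (c k + 2 * Mt t k p) := by
  have : 0 ≤ ∑ k ∈ S, Mt t k p :=
    sum_nonneg fun k hk => Mt_apply_nonneg_of_ne (ne_of_mem_of_not_mem hk hp)
  rw [sum_fire]
  omega

lemma sum_add_two_le_sum_fire (c : Fin t → ℤ) {p q : Fin t} {S : Finset (Fin t)}
    (hp : p ∉ S) (hq : q ∈ S) (hadj : (q : ℕ) + 1 = p ∨ (p : ℕ) + 1 = q) :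
    ∑ k ∈ S, c k + 2 ≤ ∑ k ∈ S, (c k + 2 * Mt t k p) := by
  have : 1 ≤ ∑ k ∈ S, Mt t k p := by
    rw [← Mt_apply_of_adj hadj]
    exact single_le_sum (fun k hk => Mt_apply_nonneg_of_ne (ne_of_mem_of_not_mem hk hp)) hq
  rw [sum_fire]
  omega

section OrdConnected

variable {S : Finset (Fin t)} (hS : (S : Set (Fin t)).OrdConnected) {k p : Fin t}
include hS

lemma exists_pred_mem_of_ordConnected (hk : k ∈ S) (hp : p ∈ S) (hkp : k < p) :
    ∃ q ∈ S, q < p ∧ (q : ℕ) + 1 = p := by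
  rw [Fin.lt_def] at hkp
  refine ⟨⟨p - 1, by omega⟩, hS.out hk hp ⟨?_, ?_⟩, ?_, ?_⟩ <;>
    simp only [Fin.le_def, Fin.lt_def] <;> omega

lemma exists_succ_mem_of_ordConnected (hk : k ∈ S) (hp : p ∈ S) (hpk : p < k) :
    ∃ q ∈ S, p < q ∧ (p : ℕ) + 1 = q := by
  rw [Fin.lt_def] at hpk
  refine ⟨⟨p + 1, by omega⟩, hS.out hp hk ⟨?_, ?_⟩, ?_, rfl⟩ <;>
    simp only [Fin.le_def, Fin.lt_def] <;> omega

end OrdConnected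

def HasHeavyInterval (c : Fin t → ℤ) : Prop :=
  ∃ S : Finset (Fin t), (S : Set (Fin t)).OrdConnected ∧ 2 < ∑ k ∈ S, c k

lemma sum_eq_sum_filter_lt_add_add_sum_filter_gt (c : Fin t → ℤ) {S : Finset (Fin t)}
    {p : Fin t} (hp : p ∈ S) :
    ∑ k ∈ S, c k = ∑ k ∈ S.filter (· < p), c k + c p + ∑ k ∈ S.filter (p < ·), c k := by
  have hsplit : S.erase p = S.filter (· < p) ∪ S.filter (p < ·) := by
    ext k
    simp only [mem_erase, mem_union, mem_filter]
    constructor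
    · rintro ⟨hne, hk⟩
      rcases hne.lt_or_gt with h | h <;> simp [hk, h]
    · rintro (⟨hk, h⟩ | ⟨hk, h⟩) <;> exact ⟨by rintro rfl; exact lt_irrefl _ h, hk⟩
  have hdisj : Disjoint (S.filter (· < p)) (S.filter (p < ·)) :=
    disjoint_filter.2 fun _ _ h₁ h₂ => lt_asymm h₁ h₂
  rw [← sum_erase_add S c hp, hsplit, sum_union hdisj]
  ring

lemma HasHeavyInterval.fire {c : Fin t → ℤ} (hc : HasHeavyInterval c) {p : Fin t}
    (hp : c p = 2) : HasHeavyInterval fun k => c k + 2 * Mt t k p := by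
  obtain ⟨S, hS, hsum⟩ := hc
  by_cases hpS : p ∈ S
  swap
  · exact ⟨S, hS, hsum.trans_le (sum_le_sum_fire_of_notMem c hpS)⟩
  have heavy_of_adj : ∀ T : Finset (Fin t), (T : Set (Fin t)).OrdConnected → p ∉ T →
      (∃ q ∈ T, (q : ℕ) + 1 = p ∨ (p : ℕ) + 1 = q) → 0 < ∑ k ∈ T, c k →
      HasHeavyInterval fun k => c k + 2 * Mt t k p := by
    rintro T hT hpT ⟨q, hqT, hadj⟩ hpos
    exact ⟨T, hT, by linarith [sum_add_two_le_sum_fire c hpT hqT hadj]⟩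
  rw [sum_eq_sum_filter_lt_add_add_sum_filter_gt c hpS, hp] at hsum
  rcases (show 0 < ∑ k ∈ S.filter (· < p), c k ∨ 0 < ∑ k ∈ S.filter (p < ·), c k by omega)
    with hpos | hpos
  · obtain ⟨k, hk⟩ := nonempty_of_sum_ne_zero hpos.ne'
    rw [mem_filter] at hk
    obtain ⟨q, hqS, hqp, hadj⟩ := exists_pred_mem_of_ordConnected hS hk.1 hpS hk.2
    refine heavy_of_adj _ ?_ (by simp) ⟨q, mem_filter.2 ⟨hqS, hqp⟩, .inl hadj⟩ hpos
    rw [coe_filter]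
    exact hS.inter Set.ordConnected_Iio
  · obtain ⟨k, hk⟩ := nonempty_of_sum_ne_zero hpos.ne'
    rw [mem_filter] at hk
    obtain ⟨q, hqS, hpq, hadj⟩ := exists_succ_mem_of_ordConnected hS hk.1 hpS hk.2
    refine heavy_of_adj _ ?_ (by simp) ⟨q, mem_filter.2 ⟨hqS, hpq⟩, .inr hadj⟩ hpos
    rw [coe_filter]
    exact hS.inter Set.ordConnected_Ioi

lemma HasHeavyInterval.of_reflTransGen {c c' : Fin t → ℤ} (hc : HasHeavyInterval c)
    (h : Relation.ReflTransGen (OSMove t) c c') : HasHeavyInterval c' := by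
  induction h with
  | refl => exact hc
  | tail _ hmove ih =>
    obtain ⟨p, hp, rfl⟩ := hmove
    exact ih.fire hp

lemma hasHeavyInterval_of_nonneg {c : Fin t → ℤ} (hc : ∀ k, 0 ≤ c k) {i j : Fin t}
    (hij : i ≠ j) (hi : c i = 2) (hj : c j = 2) : HasHeavyInterval c := by
  refine ⟨uIcc i j, by rw [coe_uIcc]; exact Set.ordConnected_uIcc, ?_⟩
  have hsub : {i, j} ⊆ uIcc i j := insert_subset_iff.2 ⟨left_mem_uIcc, by simp⟩
  have := sum_le_sum_of_subset_of_nonneg hsub fun k _ _ => hc k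
  rw [sum_pair hij, hi, hj] at this
  omega

lemma not_hasHeavyInterval_of_nonpos {c : Fin t → ℤ} (hc : ∀ k, c k ≤ 0) :
    ¬ HasHeavyInterval c := by
  rintro ⟨S, -, hsum⟩
  have : ∑ k ∈ S, c k ≤ 0 := sum_nonpos fun k _ => hc k
  omega

theorem stmt_8_general (t : ℕ) (c : Fin t → ℤ)
    (hc : ∀ i, c i = 0 ∨ c i = 2)
    (htwo : ∃ i j : Fin t, i ≠ j ∧ c i = 2 ∧ c j = 2) :
    ¬ ∃ c' : Fin t → ℤ, Relation.ReflTransGen (OSMove t) c c' ∧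
      (∀ i, c' i = -2 ∨ c' i = 0) := by
  rintro ⟨c', hreach, hc'⟩
  obtain ⟨i, j, hij, hi, hj⟩ := htwo
  have hheavy : HasHeavyInterval c :=
    hasHeavyInterval_of_nonneg (fun k => by rcases hc k with h | h <;> omega) hij hi hj
  exact not_hasHeavyInterval_of_nonpos (fun k => by rcases hc' k with h | h <;> omega)
    (hheavy.of_reflTransGen hreach)

/-- Let `t ≥ 2`. If `c ∈ {0,2}ᵗ` has at least two coordinates equal to `2`, then
no vector all of whose coordinates lie in `{−2, 0}` is reachable from `c` by a finite
sequence of Ozsváth–Szabó moves. -/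
theorem stmt_8 (t : ℕ) (ht : 2 ≤ t) (c : Fin t → ℤ)
    (hc : ∀ i, c i = 0 ∨ c i = 2)
    (htwo : ∃ i j : Fin t, i ≠ j ∧ c i = 2 ∧ c j = 2) :
    ¬ ∃ c' : Fin t → ℤ, Relation.ReflTransGen (OSMove t) c c' ∧
      (∀ i, c' i = -2 ∨ c' i = 0) :=
  stmt_8_general t c hc htwo
end

section
/- Let t ≥ 1 and consider the Ozsváth–Szabó move relation on ℤᵗ for the simple linear graph A_t (a move replaces a vector c with cᵢ = 2 by c + 2·(i-th column of M_t)). Fix 1 ≤ s ≤ t and let δ_s ∈ ℤᵗ be the vector with coordinate 2 in position s and 0 elsewhere. Then the vector η with coordinate −2 in position t+1−s and 0 elsewhere is reachable from δ_s by a finite sequence of moves; moreover, every vector reachable from δ_s all of whose coordinates lie in {−2, 0} equals η. -/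
/-!
Encode a vector by a subset `S ⊆ {0, …, t}` through `cᵢ = 2 (𝟙_S(i) − 𝟙_S(i+1))`; then `δ_s`
comes from `{0, …, s−1}` and `η` from `{t+1−s, …, t}`. A move at `i` is exactly a hop of a point
of `S` from `i` to the free slot `i+1`, so moves preserve `|S|` and terminate, since
`∑_{j∈S} (t − j)` drops by one. A configuration admits no hop iff `S` is closed under successor,
i.e. `S = {t+1−|S|, …, t}`. Hence from `δ_s` one reaches `η`, and every reachable vector without
a coordinate `2`, being the image of such a terminal configuration, is `η`.
-/

theorem Relation.exists_reflTransGen_forall_not {α : Type*} {r : α → α → Prop}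
    (hr : WellFounded (flip r)) (a : α) : ∃ b, Relation.ReflTransGen r a b ∧ ∀ c, ¬ r b c := by
  obtain ⟨b, hab, hmin⟩ := hr.has_min {b | Relation.ReflTransGen r a b} ⟨a, .refl⟩
  exact ⟨b, hab, fun c hbc => hmin c (hab.tail hbc) hbc⟩

namespace OSMove

open Finset Relation

variable {t : ℕ}

/-- Twice the weight `e_S` of `sl_{t+1}` in the basis of fundamental weights: these vectors form
the Weyl orbit of `2ω_{|S|}`, and moves are the simple reflections. -/
def subsetWeight (t : ℕ) (S : Finset (Fin (t + 1))) : Fin t → ℤ :=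
  fun i => 2 * ((if i.castSucc ∈ S then 1 else 0) - (if i.succ ∈ S then 1 else 0))

def Hop (t : ℕ) (S S' : Finset (Fin (t + 1))) : Prop :=
  ∃ i : Fin t, i.castSucc ∈ S ∧ i.succ ∉ S ∧ S' = insert i.succ (S.erase i.castSucc)

def initialSegment (t s : ℕ) : Finset (Fin (t + 1)) := {j | (j : ℕ) < s}

def finalSegment (t s : ℕ) : Finset (Fin (t + 1)) := {j | t + 1 ≤ (j : ℕ) + s}

lemma subsetWeight_eq_two_iff (S : Finset (Fin (t + 1))) (i : Fin t) :
    subsetWeight t S i = 2 ↔ i.castSucc ∈ S ∧ i.succ ∉ S := by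
  unfold subsetWeight
  split_ifs <;> simp_all

lemma subsetWeight_hop {S : Finset (Fin (t + 1))} {i : Fin t} (hi : i.castSucc ∈ S)
    (hi' : i.succ ∉ S) :
    subsetWeight t (insert i.succ (S.erase i.castSucc)) =
      fun j => subsetWeight t S j + 2 * Mt t j i := by
  funext j
  simp only [subsetWeight, Mt, Matrix.of_apply, mem_insert, mem_erase]
  grind

lemma osMove_subsetWeight_iff (S : Finset (Fin (t + 1))) (c : Fin t → ℤ) :
    OSMove t (subsetWeight t S) c ↔ ∃ S', Hop t S S' ∧ c = subsetWeight t S' := by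
  constructor
  · rintro ⟨i, hi, rfl⟩
    rw [subsetWeight_eq_two_iff] at hi
    exact ⟨_, ⟨i, hi.1, hi.2, rfl⟩, (subsetWeight_hop hi.1 hi.2).symm⟩
  · rintro ⟨_, ⟨i, hi, hi', rfl⟩, rfl⟩
    exact ⟨i, (subsetWeight_eq_two_iff S i).2 ⟨hi, hi'⟩, subsetWeight_hop hi hi'⟩

lemma reflTransGen_subsetWeight {S S' : Finset (Fin (t + 1))} (h : ReflTransGen (Hop t) S S') :
    ReflTransGen (OSMove t) (subsetWeight t S) (subsetWeight t S') :=
  ReflTransGen.lift _ (fun _ S' hop => (osMove_subsetWeight_iff _ _).2 ⟨S', hop, rfl⟩) _ _ h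

lemma exists_reflTransGen_hop {S : Finset (Fin (t + 1))} {c : Fin t → ℤ}
    (h : ReflTransGen (OSMove t) (subsetWeight t S) c) :
    ∃ S', ReflTransGen (Hop t) S S' ∧ c = subsetWeight t S' := by
  induction h with
  | refl => exact ⟨S, .refl, rfl⟩
  | tail _ move ih =>
    obtain ⟨S', hSS', rfl⟩ := ih
    obtain ⟨S'', hop, rfl⟩ := (osMove_subsetWeight_iff _ _).1 move
    exact ⟨S'', hSS'.tail hop, rfl⟩

lemma Hop.card_eq {S S' : Finset (Fin (t + 1))} (h : Hop t S S') : #S' = #S := by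
  obtain ⟨i, hi, hi', rfl⟩ := h
  rw [card_insert_of_notMem (fun h => hi' (mem_of_mem_erase h)), card_erase_of_mem hi]
  have := card_pos.2 ⟨_, hi⟩
  omega

lemma card_eq_of_reflTransGen_hop {S S' : Finset (Fin (t + 1))}
    (h : ReflTransGen (Hop t) S S') : #S' = #S := by
  induction h with
  | refl => rfl
  | tail _ hop ih => rw [hop.card_eq, ih]

lemma Hop.sum_lt {S S' : Finset (Fin (t + 1))} (h : Hop t S S') :
    ∑ j ∈ S', (t - j : ℕ) < ∑ j ∈ S, (t - j : ℕ) := by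
  obtain ⟨i, hi, hi', rfl⟩ := h
  rw [sum_insert (fun h => hi' (mem_of_mem_erase h)), ← add_sum_erase S _ hi]
  simp only [Fin.val_succ, Fin.val_castSucc]
  have := i.isLt
  omega

lemma wellFounded_flip_hop : WellFounded (flip (Hop t)) :=
  (measure fun S : Finset (Fin (t + 1)) => ∑ j ∈ S, (t - j : ℕ)).wf.mono fun _ _ h => h.sum_lt

lemma eq_finalSegment_of_succ_mem {S : Finset (Fin (t + 1))}
    (h : ∀ i : Fin t, i.castSucc ∈ S → i.succ ∈ S) : S = finalSegment t #S := by
  have hmono : Monotone (· ∈ S) := Fin.monotone_iff_le_succ.2 h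
  have hcard : #{j | j ∉ S} = t + 1 - #S := by
    rw [filter_notMem_eq_sdiff, ← compl_eq_univ_sdiff, card_compl, Fintype.card_fin]
  have hcompl (j : Fin (t + 1)) : j < t + 1 - #S ↔ j ∉ S := by
    rw [← hcard]
    exact Fin.lt_card_filter_univ_iff_apply_of_imp _ fun i k hki hi hk => hi (hmono hki hk)
  have hle : #S ≤ t + 1 := by simpa using card_le_univ S
  ext j
  simp only [finalSegment, mem_filter, mem_univ, true_and]
  rw [← not_iff_not, ← hcompl]
  omega

lemma eq_finalSegment_of_subsetWeight_ne_two {S : Finset (Fin (t + 1))}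
    (h : ∀ i, subsetWeight t S i ≠ 2) : S = finalSegment t #S :=
  eq_finalSegment_of_succ_mem fun i hi =>
    by_contra fun hi' => h i ((subsetWeight_eq_two_iff S i).2 ⟨hi, hi'⟩)

lemma reflTransGen_hop_finalSegment (S : Finset (Fin (t + 1))) :
    ReflTransGen (Hop t) S (finalSegment t #S) := by
  obtain ⟨S', hSS', hnormal⟩ := exists_reflTransGen_forall_not wellFounded_flip_hop S
  have hS' : S' = finalSegment t #S' :=
    eq_finalSegment_of_succ_mem fun i hi => by_contra fun hi' => hnormal _ ⟨i, hi, hi', rfl⟩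
  rwa [← card_eq_of_reflTransGen_hop hSS', ← hS']

lemma card_initialSegment {s : ℕ} (hs : s ≤ t + 1) : #(initialSegment t s) = s := by
  rw [initialSegment, Fin.card_filter_val_lt]
  omega

lemma subsetWeight_initialSegment {s : ℕ} (hs : 1 ≤ s) :
    subsetWeight t (initialSegment t s) =
      fun i : Fin t => if (i : ℕ) = s - 1 then (2 : ℤ) else 0 := by
  funext i
  simp only [subsetWeight, initialSegment, mem_filter, mem_univ, true_and, Fin.val_castSucc,
    Fin.val_succ]
  split_ifs <;> omega

lemma subsetWeight_finalSegment {s : ℕ} (hs : s ≤ t) :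
    subsetWeight t (finalSegment t s) =
      fun i : Fin t => if (i : ℕ) = t - s then (-2 : ℤ) else 0 := by
  funext i
  simp only [subsetWeight, finalSegment, mem_filter, mem_univ, true_and, Fin.val_castSucc,
    Fin.val_succ]
  split_ifs <;> omega

end OSMove

theorem stmt_9_general (t s : ℕ) (hs : 1 ≤ s) (hst : s ≤ t) :
    Relation.ReflTransGen (OSMove t)
      (fun i : Fin t => if (i : ℕ) = s - 1 then 2 else 0)
      (fun i : Fin t => if (i : ℕ) = t - s then -2 else 0) ∧
    ∀ c' : Fin t → ℤ,
      Relation.ReflTransGen (OSMove t) (fun i : Fin t => if (i : ℕ) = s - 1 then 2 else 0) c' →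
      (∀ i, c' i = -2 ∨ c' i = 0) →
      c' = fun i : Fin t => if (i : ℕ) = t - s then -2 else 0 := by
  have hcard := OSMove.card_initialSegment (t := t) (by omega : s ≤ t + 1)
  rw [← OSMove.subsetWeight_initialSegment hs, ← OSMove.subsetWeight_finalSegment hst]
  refine ⟨?_, fun c' hc' hvals => ?_⟩
  · have h := OSMove.reflTransGen_hop_finalSegment (OSMove.initialSegment t s)
    rw [hcard] at h
    exact OSMove.reflTransGen_subsetWeight h
  obtain ⟨S, hS, rfl⟩ := OSMove.exists_reflTransGen_hop hc'
  have hnormal (i : Fin t) : OSMove.subsetWeight t S i ≠ 2 := by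
    rcases hvals i with h | h <;> rw [h] <;> norm_num
  rw [OSMove.eq_finalSegment_of_subsetWeight_ne_two hnormal,
    OSMove.card_eq_of_reflTransGen_hop hS, hcard]

/-- Let `t ≥ 1` and `1 ≤ s ≤ t`. Let `δ_s` be the vector with coordinate `2` in
position `s` (index `s−1`) and `0` elsewhere, and let `η` be the vector with coordinate `−2`
in position `t+1−s` (index `t−s`) and `0` elsewhere. Then `η` is reachable from `δ_s` by a
finite sequence of Ozsváth–Szabó moves, and every vector reachable from `δ_s` all of whose
coordinates lie in `{−2,0}` equals `η`. -/
theorem stmt_9 (t s : ℕ) (ht : 1 ≤ t) (hs : 1 ≤ s) (hst : s ≤ t) :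
    Relation.ReflTransGen (OSMove t)
      (fun i : Fin t => if (i : ℕ) = s - 1 then 2 else 0)
      (fun i : Fin t => if (i : ℕ) = t - s then -2 else 0) ∧
    ∀ c' : Fin t → ℤ,
      Relation.ReflTransGen (OSMove t) (fun i : Fin t => if (i : ℕ) = s - 1 then 2 else 0) c' →
      (∀ i, c' i = -2 ∨ c' i = 0) →
      c' = fun i : Fin t => if (i : ℕ) = t - s then -2 else 0 :=
  stmt_9_general t s hs hst
end

section
/- Let p, q, r be positive integers with 2 ≤ p < q < r satisfying pq + pr − qr = 1, and define Δ(y) = 4(2y − (q+r))² − 16(q+r)(p−1) and f(x,y) = −(q+r)x² + 4qxy − 4(q−p)y² − 4y. Then Δ is strictly decreasing on the interval [0, (p−1)/2] and Δ(y) < 4(q+r)² for all y in this interval. Consequently, for any integers a, m with −p ≤ a ≤ p, 0 ≤ m ≤ (p−1)/2, and f(a,m) ≥ f(1,1), one has |a(q+r) − 2qm| < q+r. -/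
/-!
Write `Q = q + r`. Completing the square in `x`, the relation `pq + pr − qr = 1` says exactly
`q² − Q(q − p) = 1`, so `Q·f(x,y) = −(Qx − 2qy)² + 4y² − 4Qy`. For `0 ≤ m ≤ Q` we have `4m² − 4Qm ≤ 0`,
and `Q·f(1,1) = −(r − q)² + 4 − 4Q`; hence `f(a,m) ≥ f(1,1)` forces
`(aQ − 2qm)² ≤ (r − q)² + 4Q − 4 = Q² − 4(q − 1)(r − 1) < Q²`.
The claims on `Δ` only use that `(2y − Q)²` decreases for `y ≤ Q/2`.
-/

/-- The quadratic function `f(x,y) = −(q+r)x² + 4qxy − 4(q−p)y² − 4y` as a real function. -/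
noncomputable def fR (p q r : ℕ) (x y : ℝ) : ℝ :=
  -((q : ℝ) + r) * x ^ 2 + 4 * q * x * y - 4 * ((q : ℝ) - p) * y ^ 2 - 4 * y

/-- The discriminant `Δ(y) = 4(2y − (q+r))² − 16(q+r)(p−1)` as a real function. -/
noncomputable def ΔR (p q r : ℕ) (y : ℝ) : ℝ :=
  4 * (2 * y - ((q : ℝ) + r)) ^ 2 - 16 * ((q : ℝ) + r) * ((p : ℝ) - 1)

section

variable {p q r : ℕ}

theorem ΔR_strictAntiOn_Iic : StrictAntiOn (ΔR p q r) (Set.Iic (((q : ℝ) + r) / 2)) := by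
  intro y₁ hy₁ y₂ hy₂ h
  simp only [Set.mem_Iic] at hy₁ hy₂
  unfold ΔR
  nlinarith [mul_pos (sub_pos.2 h) (show (0 : ℝ) < q + r - y₁ - y₂ by linarith)]

theorem ΔR_lt_of_mem_Icc (hp : 1 < p) (hqr : 0 < q + r) {y : ℝ} (hy : y ∈ Set.Icc 0 ((q : ℝ) + r)) :
    ΔR p q r y < 4 * ((q : ℝ) + r) ^ 2 := by
  obtain ⟨hy₀, hyQ⟩ := hy
  have hp' : (1 : ℝ) < p := by exact_mod_cast hp
  have hQ : (0 : ℝ) < q + r := by exact_mod_cast hqr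
  unfold ΔR
  nlinarith [mul_nonneg hy₀ (sub_nonneg.2 hyQ), mul_pos hQ (sub_pos.2 hp')]

theorem mul_fR_eq (heq : (p : ℝ) * q + p * r - q * r = 1) (x y : ℝ) :
    ((q : ℝ) + r) * fR p q r x y
      = -(((q : ℝ) + r) * x - 2 * q * y) ^ 2 + 4 * y ^ 2 - 4 * ((q : ℝ) + r) * y := by
  unfold fR
  linear_combination 4 * y ^ 2 * heq

theorem sq_sub_lt_of_fR_le (heq : (p : ℝ) * q + p * r - q * r = 1) (hq : 1 < q) (hr : 1 < r)
    {x y : ℝ} (hy : y ∈ Set.Icc 0 ((q : ℝ) + r)) (hf : fR p q r 1 1 ≤ fR p q r x y) :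
    (((q : ℝ) + r) * x - 2 * q * y) ^ 2 < ((q : ℝ) + r) ^ 2 := by
  obtain ⟨hy₀, hyQ⟩ := hy
  have hq' : (1 : ℝ) < q := by exact_mod_cast hq
  have hr' : (1 : ℝ) < r := by exact_mod_cast hr
  have hQf : ((q : ℝ) + r) * fR p q r 1 1 ≤ ((q : ℝ) + r) * fR p q r x y :=
    mul_le_mul_of_nonneg_left hf (by positivity)
  rw [mul_fR_eq heq, mul_fR_eq heq] at hQf
  nlinarith [mul_nonneg hy₀ (sub_nonneg.2 hyQ), mul_pos (sub_pos.2 hq') (sub_pos.2 hr')]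

end

/-- Let `p, q, r` be positive integers with `2 ≤ p < q < r` and
`pq + pr − qr = 1`. Then `Δ` is strictly decreasing on `[0, (p−1)/2]` and `Δ(y) < 4(q+r)²`
there. Consequently, for integers `a, m` with `−p ≤ a ≤ p`, `0 ≤ m ≤ (p−1)/2`, and
`f(a,m) ≥ f(1,1)`, one has `|a(q+r) − 2qm| < q+r`. -/
theorem stmt_12 (p q r : ℕ) (hp : 2 ≤ p) (hpq : p < q) (hqr : q < r)
    (heq : (p : ℤ) * q + (p : ℤ) * r - (q : ℤ) * r = 1) :
    StrictAntiOn (ΔR p q r) (Set.Icc 0 (((p : ℝ) - 1) / 2)) ∧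
    (∀ y ∈ Set.Icc (0 : ℝ) (((p : ℝ) - 1) / 2), ΔR p q r y < 4 * ((q : ℝ) + r) ^ 2) ∧
    (∀ a m : ℤ, -(p : ℤ) ≤ a → a ≤ p → 0 ≤ m → 2 * m ≤ (p : ℤ) - 1 →
      fR p q r a m ≥ fR p q r 1 1 →
      |(a : ℝ) * ((q : ℝ) + r) - 2 * q * m| < (q : ℝ) + r) := by
  have hpQ : (p : ℝ) - 1 ≤ q + r := by
    have : (p : ℝ) ≤ q + r := by exact_mod_cast (by omega : p ≤ q + r)
    linarith
  have hsub : Set.Icc (0 : ℝ) (((p : ℝ) - 1) / 2) ⊆ Set.Icc 0 ((q : ℝ) + r) :=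
    Set.Icc_subset_Icc_right (by linarith)
  refine ⟨ΔR_strictAntiOn_Iic.mono fun y hy ↦ hy.2.trans (by linarith),
    fun y hy ↦ ΔR_lt_of_mem_Icc (by omega) (by omega) (hsub hy), fun a m _ _ hm₀ hm hf ↦ ?_⟩
  have hm' : (m : ℝ) ∈ Set.Icc 0 (((p : ℝ) - 1) / 2) :=
    ⟨by exact_mod_cast hm₀, by rw [le_div_iff₀ two_pos, mul_comm]; exact_mod_cast hm⟩
  have hlt := sq_sub_lt_of_fR_le (by exact_mod_cast heq) (by omega) (by omega) (hsub hm') hf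
  exact abs_lt_of_sq_lt_sq (by linarith) (by positivity)
end

section
/- For every integer n ≥ 1, set p = 2n+1, q = 4n+1, r = 4n+3, and f(x,y) = −(q+r)x² + 4qxy − 4(q−p)y² − 4y. Then the maximum of f(a,m) over all integer pairs (a,m) with −p ≤ a ≤ p, a odd, and 0 ≤ m ≤ n equals −4, attained at (a,m) = (1,1). Equivalently, (max f + q + r)/4 = 2n. -/
/-- The integer-valued quadratic `f(x,y) = −(q+r)x² + 4qxy − 4(q−p)y² − 4y`. -/
def fZ (p q r a m : ℤ) : ℤ :=
  -(q + r) * a ^ 2 + 4 * q * a * m - 4 * (q - p) * m ^ 2 - 4 * m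

/-- For every integer `n ≥ 1`, with `(p,q,r) = (2 * n + 1, 4 * n + 1, 4 * n + 3)`, the maximum
of `f(a,m)` over integer pairs `(a,m)` with `−p ≤ a ≤ p`, `a` odd, `0 ≤ m ≤ n` equals
`-4`, attained as indicated; equivalently `(max f + q + r)/4 = 2 * n`. -/
theorem stmt_15 (n : ℤ) (hn : 1 ≤ n) :
    IsGreatest
      {x : ℤ | ∃ a m : ℤ, -(2 * n + 1) ≤ a ∧ a ≤ 2 * n + 1 ∧ Odd a ∧ 0 ≤ m ∧ m ≤ n ∧
        x = fZ (2 * n + 1) (4 * n + 1) (4 * n + 3) a m}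
      (-4) ∧
    fZ (2 * n + 1) (4 * n + 1) (4 * n + 3) 1 1 = -4 ∧
    ((-4) + ((4 * n + 1) + (4 * n + 3))) / 4 = 2 * n := by
  refine ⟨⟨⟨1, 1, by linarith, by linarith, ⟨0, by ring⟩, by norm_num, hn, ?_⟩, ?_⟩, ?_, ?_⟩
  · simp [fZ]; ring
  · rintro x ⟨a, m, h1, h2, ⟨k, hk⟩, h4, h5, rfl⟩
    simp only [fZ]
    rcases le_or_gt a 0 with ha | ha
    · have ha1 : a ≤ -1 := by omega
      nlinarith [sq_nonneg (a + 1), mul_nonneg (neg_nonneg.mpr ha) h4, sq_nonneg m,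
        mul_nonneg (mul_nonneg (neg_nonneg.mpr ha) h4) (by linarith : (0:ℤ) ≤ n)]
    · have ha1 : 1 ≤ a := ha
      have hd : 0 ≤ (a - 1) * (8 * n + 1 - a) := by
        apply mul_nonneg <;> linarith
      nlinarith [sq_nonneg (4 * n * m - (4 * n + 1) * a + 1), hd, hn,
        mul_nonneg hd (by linarith : (0:ℤ) ≤ n)]
  · simp [fZ]; ring
  · omega
end

section
/- For every integer n ≥ 1, set p = 2n+1, q = 3n+2, r = 6n+1, and f(x,y) = −(q+r)x² + 4qxy − 4(q−p)y² − 4y. Then the maximum of f(a,m) over all integer pairs (a,m) with −p ≤ a ≤ p, a odd, and 0 ≤ m ≤ n equals −n−3, attained at (a,m) = (1,1). Equivalently, (max f + q + r)/4 = 2n. -/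
lemma consec (t : ℤ) : 0 ≤ t * (t + 1) := by
  rcases le_or_gt 0 t with h | h
  · nlinarith
  · nlinarith

lemma key (n b m : ℤ) (hn : 1 ≤ n) (hb1 : -(n+1) ≤ b) (hb2 : b ≤ n)
    (hm0 : 0 ≤ m) (hm1 : m ≤ n) :
    -(36*n+12)*b^2 - (36*n+12)*b + (24*n+16)*b*m + (12*n+4)*m - (4*n+4)*m^2 - 8*n ≤ 0 := by
  -- -g = 4*(n*(t-1)*(t-2) + t*(m-b-1)) with t = m - 3b
  have hc : 0 ≤ (m - 3*b - 2) * (m - 3*b - 1) := by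
    have := consec (m - 3*b - 2); linarith [this]
  rcases le_or_gt (m - 3*b) (-1) with ht | ht
  · -- t ≤ -1, so b ≥ 1
    have hb : 1 ≤ b := by omega
    nlinarith [mul_nonneg (by linarith : (0:ℤ) ≤ n) hc,
      mul_nonneg (by linarith : (0:ℤ) ≤ 3*b - m) (by linarith : (0:ℤ) ≤ n - m + b + 1),
      mul_nonneg (by linarith : (0:ℤ) ≤ 3*b - m - 1) (by linarith : (0:ℤ) ≤ 3*b - m),
      mul_nonneg (by linarith : (0:ℤ) ≤ n - 1) (mul_nonneg (by linarith : (0:ℤ) ≤ 3*b - m - 1) (by linarith : (0:ℤ) ≤ 3*b - m))]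
  · rcases le_or_gt (m - 3*b) 1 with ht2 | ht2
    · -- t ∈ {0, 1}
      interval_cases h : (m - 3*b)
      · have hm : m = 3*b := by omega
        subst hm; nlinarith
      · have hb : 0 ≤ b := by omega
        have hm : m = 3*b + 1 := by omega
        subst hm; nlinarith
    · -- t ≥ 2: both terms nonneg
      have h2 : 0 ≤ m - b - 1 := by
        rcases le_or_gt 0 b with h | h
        · omega
        · omega
      nlinarith [mul_nonneg (by linarith : (0:ℤ) ≤ n) hc,
        mul_nonneg (by linarith : (0:ℤ) ≤ m - 3*b) h2]

/-- For every integer `n ≥ 1`, with `(p,q,r) = (2 * n + 1, 3 * n + 2, 6 * n + 1)`, the maximum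
of `f(a,m)` over integer pairs `(a,m)` with `−p ≤ a ≤ p`, `a` odd, `0 ≤ m ≤ n` equals
`-n - 3`, attained as indicated; equivalently `(max f + q + r)/4 = 2 * n`. -/
theorem stmt_16 (n : ℤ) (hn : 1 ≤ n) :
    IsGreatest
      {x : ℤ | ∃ a m : ℤ, -(2 * n + 1) ≤ a ∧ a ≤ 2 * n + 1 ∧ Odd a ∧ 0 ≤ m ∧ m ≤ n ∧
        x = fZ (2 * n + 1) (3 * n + 2) (6 * n + 1) a m}
      (-n - 3) ∧
    fZ (2 * n + 1) (3 * n + 2) (6 * n + 1) 1 1 = -n - 3 ∧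
    ((-n - 3) + ((3 * n + 2) + (6 * n + 1))) / 4 = 2 * n := by
  refine ⟨⟨⟨1, 1, by linarith, by linarith, ⟨0, by ring⟩, by norm_num, hn, by
    simp [fZ]; ring⟩, ?_⟩, by simp [fZ]; ring, by omega⟩
  rintro x ⟨a, m, ha1, ha2, ⟨b, hb⟩, hm0, hm1, rfl⟩
  have h := key n b m hn (by omega) (by omega) hm0 hm1
  simp only [fZ]
  subst hb
  nlinarith [h]
end

section
/- For every integer n ≥ 1, set p = 2n+1, q = 3n+1, r = 6n+5, and f(x,y) = −(q+r)x² + 4qxy − 4(q−p)y² − 4y. Then the maximum of f(a,m) over all integer pairs (a,m) with −p ≤ a ≤ p, a odd, and 0 ≤ m ≤ n equals −n−6, attained at both (a,m) = (1,1) and (a,m) = (1,2). Equivalently, (max f + q + r)/4 = 2n. -/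
def completedSquareTerm (n a m : ℤ) : ℤ := 2 * n * m - (3 * n + 1) * a + 1

theorem mul_fZ_add (n a m : ℤ) :
    n * (fZ (2 * n + 1) (3 * n + 1) (6 * n + 5) a m + n + 6) =
      (3 * n + 1 - a) ^ 2 - 8 * n ^ 2 - completedSquareTerm n a m ^ 2 := by
  unfold fZ completedSquareTerm
  ring

theorem le_completedSquareTerm_of_neg {n a m : ℤ} (hn : 0 ≤ n) (ha : a ≤ -1) (hm : 0 ≤ m) :
    3 * n + 1 - a ≤ completedSquareTerm n a m := by
  unfold completedSquareTerm
  nlinarith [mul_nonneg hn hm]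

theorem le_abs_completedSquareTerm_of_odd {n a m : ℤ} (hn : 0 ≤ n) (ha : 1 ≤ a) (hodd : Odd a) :
    n + 1 - a ≤ |completedSquareTerm n a m| := by
  have hS : completedSquareTerm n a m = n * (2 * m - 3 * a) - (a - 1) := by
    unfold completedSquareTerm; ring
  have hj : Odd (2 * m - 3 * a) := (even_two_mul m).sub_odd ((by decide : Odd (3 : ℤ)).mul hodd)
  rcases le_or_gt (2 * m - 3 * a) 0 with hj0 | hj0
  · have hj1 : 2 * m - 3 * a ≤ -1 := by
      rcases hj with ⟨k, hk⟩
      omega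
    have := mul_le_mul_of_nonneg_left hj1 hn
    rw [hS, abs_of_nonpos (by linarith)]
    linarith
  · have := mul_le_mul_of_nonneg_left (show (1 : ℤ) ≤ 2 * m - 3 * a by omega) hn
    rw [hS]
    exact le_abs.mpr (Or.inl (by linarith))

theorem sq_sub_le_sq_completedSquareTerm {n a m : ℤ} (hn : 0 ≤ n) (ha : a ≤ 2 * n + 1)
    (hodd : Odd a) (hm : 0 ≤ m) :
    (3 * n + 1 - a) ^ 2 - 8 * n ^ 2 ≤ completedSquareTerm n a m ^ 2 := by
  rcases le_or_gt a (-1) with hneg | hpos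
  · have h := le_completedSquareTerm_of_neg hn hneg hm
    nlinarith [pow_le_pow_left₀ (by linarith) h 2]
  rcases le_or_gt a n with hle | hgt
  · have ha1 : 1 ≤ a := by
      rcases hodd with ⟨k, rfl⟩
      omega
    have h := le_abs_completedSquareTerm_of_odd (m := m) hn ha1 hodd
    have h2 := pow_le_pow_left₀ (by linarith) h 2
    rw [sq_abs] at h2
    nlinarith [mul_nonneg hn (sub_nonneg.mpr ha1)]
  · nlinarith [sq_le_sq' (show -(2 * n) ≤ 3 * n + 1 - a by linarith)
      (show 3 * n + 1 - a ≤ 2 * n by omega)]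

theorem fZ_le_neg_sub_six {n a m : ℤ} (hn : 0 < n) (ha : a ≤ 2 * n + 1) (hodd : Odd a)
    (hm : 0 ≤ m) : fZ (2 * n + 1) (3 * n + 1) (6 * n + 5) a m ≤ -n - 6 := by
  have hmul : n * (fZ (2 * n + 1) (3 * n + 1) (6 * n + 5) a m + n + 6) ≤ 0 := by
    rw [mul_fZ_add]
    linarith [sq_sub_le_sq_completedSquareTerm hn.le ha hodd hm]
  linarith [Int.nonpos_of_mul_nonpos_right hmul hn]

/-- For every integer `n ≥ 1`, with `(p,q,r) = (2 * n + 1, 3 * n + 1, 6 * n + 5)`, the maximum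
of `f(a,m)` over integer pairs `(a,m)` with `−p ≤ a ≤ p`, `a` odd, `0 ≤ m ≤ n` equals
`-n - 6`, attained as indicated; equivalently `(max f + q + r)/4 = 2 * n`. -/
theorem stmt_17 (n : ℤ) (hn : 1 ≤ n) :
    IsGreatest
      {x : ℤ | ∃ a m : ℤ, -(2 * n + 1) ≤ a ∧ a ≤ 2 * n + 1 ∧ Odd a ∧ 0 ≤ m ∧ m ≤ n ∧
        x = fZ (2 * n + 1) (3 * n + 1) (6 * n + 5) a m}
      (-n - 6) ∧
    fZ (2 * n + 1) (3 * n + 1) (6 * n + 5) 1 1 = -n - 6 ∧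
    fZ (2 * n + 1) (3 * n + 1) (6 * n + 5) 1 2 = -n - 6 ∧
    ((-n - 6) + ((3 * n + 1) + (6 * n + 5))) / 4 = 2 * n := by
  have at_one_one : fZ (2 * n + 1) (3 * n + 1) (6 * n + 5) 1 1 = -n - 6 := by unfold fZ; ring
  have at_one_two : fZ (2 * n + 1) (3 * n + 1) (6 * n + 5) 1 2 = -n - 6 := by unfold fZ; ring
  refine ⟨⟨⟨1, 1, by omega, by omega, odd_one, zero_le_one, hn, at_one_one.symm⟩, ?_⟩,
    at_one_one, at_one_two, by omega⟩
  rintro x ⟨a, m, -, ha, hodd, hm, -, rfl⟩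
  exact fZ_le_neg_sub_six hn ha hodd hm
end

section
/- For every integer n ≥ 1, set p = 4n+3, q = 5n+4, r = 20n+11, and f(x,y) = −(q+r)x² + 4qxy − 4(q−p)y² − 4y. Then the maximum of f(a,m) over all integer pairs (a,m) with −p ≤ a ≤ p, a odd, and 0 ≤ m ≤ 2n+1 equals −n−7, attained at (a,m) = (1,2). Equivalently, (max f + q + r)/4 = 6n+2. -/
theorem fZ_eq_d_form (n a m : ℤ) :
    fZ (4 * n + 3) (5 * n + 4) (20 * n + 11) a m =
      -(n + 1) * (5 * a - 2 * m) ^ 2 + 2 * (5 * a - 2 * m) + 2 * a * (5 * a - 2 * m - 5) := by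
  unfold fZ; ring

theorem d_form_le (n a d : ℤ) (hn : 1 ≤ n) (ha : a ≤ 4 * n + 3) (hda : d ≤ 5 * a)
    (ha_odd : Odd a) (hd_odd : Odd d) :
    -(n + 1) * d ^ 2 + 2 * d + 2 * a * (d - 5) ≤ -n - 7 := by
  obtain ⟨k, rfl⟩ := hd_odd
  rcases le_or_gt 2 k with hk | hk
  · nlinarith [mul_nonneg (by omega : (0 : ℤ) ≤ 4 * n + 3 - a) (by omega : (0 : ℤ) ≤ 2 * k - 4),
      mul_nonneg (by omega : (0 : ℤ) ≤ n + 1) (sq_nonneg (2 * k - 3))]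
  rcases le_or_gt k (-2) with hk' | hk'
  · nlinarith [mul_nonneg (by omega : (0 : ℤ) ≤ 5 * a - (2 * k + 1))
        (by omega : (0 : ℤ) ≤ 4 - 2 * k),
      mul_nonneg (by omega : (0 : ℤ) ≤ n - 1)
        (mul_nonneg (by omega : (0 : ℤ) ≤ -2 * k - 2) (by omega : (0 : ℤ) ≤ -2 * k))]
  have ha_pos : 1 ≤ a := by obtain ⟨j, rfl⟩ := ha_odd; omega
  interval_cases k <;> nlinarith

theorem fZ_le (n a m : ℤ) (hn : 1 ≤ n) (ha : a ≤ 4 * n + 3) (hm : 0 ≤ m) (ha_odd : Odd a) :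
    fZ (4 * n + 3) (5 * n + 4) (20 * n + 11) a m ≤ -n - 7 := by
  rw [fZ_eq_d_form]
  refine d_form_le n a _ hn ha (by omega) ha_odd ?_
  obtain ⟨j, rfl⟩ := ha_odd
  exact ⟨5 * j - m + 2, by ring⟩

/-- For every integer `n ≥ 1`, with `(p,q,r) = (4 * n + 3, 5 * n + 4, 20 * n + 11)`, the maximum
of `f(a,m)` over integer pairs `(a,m)` with `−p ≤ a ≤ p`, `a` odd, `0 ≤ m ≤ 2 * n + 1` equals
`-n - 7`, attained as indicated; equivalently `(max f + q + r)/4 = 6 * n + 2`. -/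
theorem stmt_18 (n : ℤ) (hn : 1 ≤ n) :
    IsGreatest
      {x : ℤ | ∃ a m : ℤ, -(4 * n + 3) ≤ a ∧ a ≤ 4 * n + 3 ∧ Odd a ∧ 0 ≤ m ∧ m ≤ 2 * n + 1 ∧
        x = fZ (4 * n + 3) (5 * n + 4) (20 * n + 11) a m}
      (-n - 7) ∧
    fZ (4 * n + 3) (5 * n + 4) (20 * n + 11) 1 2 = -n - 7 ∧
    ((-n - 7) + ((5 * n + 4) + (20 * n + 11))) / 4 = 6 * n + 2 := by
  have hval : fZ (4 * n + 3) (5 * n + 4) (20 * n + 11) 1 2 = -n - 7 := by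
    unfold fZ; ring
  refine ⟨⟨⟨1, 2, by omega, by omega, odd_one, by norm_num, by omega, hval.symm⟩, ?_⟩, hval,
    by omega⟩
  rintro x ⟨a, m, -, ha, ha_odd, hm, -, rfl⟩
  exact fZ_le n a m hn ha hm ha_odd
end

section
/- For every integer n ≥ 1, set p = 2n+1, q = 2n+2, r = 4n²+6n+1, and f(x,y) = −(q+r)x² + 4qxy − 4(q−p)y² − 4y. Then the maximum of f(a,m) over all integer pairs (a,m) with −p ≤ a ≤ p, a odd, and 0 ≤ m ≤ n equals −4n−3, attained at (a,m) = (1,n). Equivalently, (max f + q + r)/4 = n² + n. -/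
/-- For every integer `n ≥ 1`, with `(p,q,r) = (2 * n + 1, 2 * n + 2, 4 * n ^ 2 + 6 * n + 1)`, the maximum
of `f(a,m)` over integer pairs `(a,m)` with `−p ≤ a ≤ p`, `a` odd, `0 ≤ m ≤ n` equals
`-4 * n - 3`, attained as indicated; equivalently `(max f + q + r)/4 = n ^ 2 + n`. -/
theorem stmt_19 (n : ℤ) (hn : 1 ≤ n) :
    IsGreatest
      {x : ℤ | ∃ a m : ℤ, -(2 * n + 1) ≤ a ∧ a ≤ 2 * n + 1 ∧ Odd a ∧ 0 ≤ m ∧ m ≤ n ∧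
        x = fZ (2 * n + 1) (2 * n + 2) (4 * n ^ 2 + 6 * n + 1) a m}
      (-4 * n - 3) ∧
    fZ (2 * n + 1) (2 * n + 2) (4 * n ^ 2 + 6 * n + 1) 1 n = -4 * n - 3 ∧
    ((-4 * n - 3) + ((2 * n + 2) + (4 * n ^ 2 + 6 * n + 1))) / 4 = n ^ 2 + n := by
  have hval : fZ (2 * n + 1) (2 * n + 2) (4 * n ^ 2 + 6 * n + 1) 1 n = -4 * n - 3 := by
    simp only [fZ]; ring
  refine ⟨⟨⟨1, n, by omega, by omega, ⟨0, by ring⟩, by omega, le_refl n, hval.symm⟩, ?_⟩,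
    hval, ?_⟩
  · rintro x ⟨a, m, h1, h2, ⟨b, hb⟩, h3, h4, rfl⟩
    simp only [fZ]
    -- key identity: f = -((2n+1)a - 2m)*((2n+3)a - 2m) - 4m
    rcases le_or_gt 1 a with ha | ha
    · rcases le_or_gt a 1 with ha1 | ha1
      · have : a = 1 := le_antisymm ha1 ha
        subst this
        nlinarith [sq_nonneg (n - m)]
      · have ha3 : 3 ≤ a := by omega
        have hu : 4 * n + 3 ≤ (2 * n + 1) * a - 2 * m := by nlinarith
        have hv : (2 * n + 1) * a - 2 * m + 2 ≤ (2 * n + 3) * a - 2 * m := by nlinarith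
        nlinarith [mul_le_mul hu hv (by nlinarith) (by nlinarith)]
    · have ha' : a ≤ -1 := by omega
      have hu : 2 * n + 1 ≤ -((2 * n + 1) * a - 2 * m) := by nlinarith
      have hv : 2 * n + 3 ≤ -((2 * n + 3) * a - 2 * m) := by nlinarith
      nlinarith [mul_le_mul hu hv (by nlinarith) (by nlinarith)]
  · have h : (-4 * n - 3) + ((2 * n + 2) + (4 * n ^ 2 + 6 * n + 1)) = 4 * (n ^ 2 + n) := by
      ring
    rw [h, Int.mul_ediv_cancel_left _ (by norm_num)]
end
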